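/- arXiv:2303.00878 — 8 statements merged into one kernel-verified Lean document; each statement's English description precedes it below -/
import Mathlib

section
/- Let p_1, …, p_n be a point sequence in ℝ² in general position. Then |α_T| ∈ O(n·|T|); concretely, for each edge e occurring as an edge of a triangle of T there exists a finite partition of the α-edge activity space L^α_e into cuboids such that the total number of cuboids over all such edges is at most 3·(n−1)·|T|. -/
open Metric

noncomputable abbrev Pt : Type := EuclideanSpace ℝ (Fin 2)

/-- The points `p 1, …, p n` are in general position: pairwise distinct, no three
collinear, no four cocircular. -/
def GenPos (n : ℕ) (p : ℕ → Pt) : Prop :=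
  (∀ i j : ℕ, 1 ≤ i → i ≤ n → 1 ≤ j → j ≤ n → i ≠ j → p i ≠ p j) ∧
  (∀ a b c : ℕ, 1 ≤ a → a ≤ n → 1 ≤ b → b ≤ n → 1 ≤ c → c ≤ n →
    a ≠ b → a ≠ c → b ≠ c → ¬ Collinear ℝ ({p a, p b, p c} : Set Pt)) ∧
  (∀ a b c d : ℕ, 1 ≤ a → a ≤ n → 1 ≤ b → b ≤ n → 1 ≤ c → c ≤ n → 1 ≤ d → d ≤ n →
    a ≠ b → a ≠ c → a ≠ d → b ≠ c → b ≠ d → c ≠ d →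
    ¬ ∃ (o : Pt) (r : ℝ),
        dist o (p a) = r ∧ dist o (p b) = r ∧ dist o (p c) = r ∧ dist o (p d) = r)

/-- `t` (a set of vertex indices) is a (possibly degenerate) Delaunay triangle of the time
window `P_{i,j}`. A proper triangle (`card t = 3`) must have its open circumdisk empty of
the points of the window; a degenerate triangle / hull facet (`card t = 2`) must have all
other points of the window strictly on one side of the line through its two vertices. -/
def IsDelaunayTriangle (n : ℕ) (p : ℕ → Pt) (i j : ℕ) (t : Finset ℕ) : Prop :=
  1 ≤ i ∧ i ≤ j ∧ j ≤ n ∧ (∀ k ∈ t, i ≤ k ∧ k ≤ j) ∧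
  ((t.card = 3 ∧ ∃ (o : Pt) (r : ℝ), (∀ k ∈ t, dist o (p k) = r) ∧
      ∀ m : ℕ, i ≤ m → m ≤ j → r ≤ dist o (p m)) ∨
   (t.card = 2 ∧ ∃ u : Pt, ‖u‖ = 1 ∧ (∀ k ∈ t, ∀ l ∈ t, (inner ℝ u (p k - p l) : ℝ) = 0) ∧
      ∀ k ∈ t, ∀ m : ℕ, i ≤ m → m ≤ j → m ∉ t → (inner ℝ (p m - p k) u : ℝ) < 0))

/-- `T`: the set of all (possibly degenerate) Delaunay triangles over all time windows. -/
def TriSet (n : ℕ) (p : ℕ → Pt) : Set (Finset ℕ) :=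
  {t | ∃ i j : ℕ, IsDelaunayTriangle n p i j t}

/-- The edges occurring as an edge of some triangle of `T`. -/
def EdgeSet (n : ℕ) (p : ℕ → Pt) : Set (Finset ℕ) :=
  {e | e.card = 2 ∧ ∃ t ∈ TriSet n p, e ⊆ t}

/-- The `α`-edge activity space `L^α_e` of the edge `e`: all triples `(i, j, α)` such that
`1 ≤ i ≤ min e`, `max e ≤ j ≤ n`, `α > 0`, and there is an open disk of radius `α` with the
two vertices of `e` on its boundary containing no point of `P_{i,j}`. -/
def ActivitySpace (n : ℕ) (p : ℕ → Pt) (e : Finset ℕ) : Set (ℕ × ℕ × ℝ) :=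
  {x | 1 ≤ x.1 ∧ x.2.1 ≤ n ∧ (∀ k ∈ e, x.1 ≤ k ∧ k ≤ x.2.1) ∧ 0 < x.2.2 ∧
    ∃ c : Pt, (∀ k ∈ e, dist c (p k) = x.2.2) ∧
      ∀ m : ℕ, x.1 ≤ m → m ≤ x.2.1 → x.2.2 ≤ dist c (p m)}

/-- A cuboid: a product of an integer interval, an integer interval, and a real interval. -/
def IsCuboid (S : Set (ℕ × ℕ × ℝ)) : Prop :=
  ∃ (I₁ I₂ : Set ℕ) (I₃ : Set ℝ), I₁.OrdConnected ∧ I₂.OrdConnected ∧ I₃.OrdConnected ∧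
    S = I₁ ×ˢ (I₂ ×ˢ I₃)

/-- `F` is a finite partition of `L` into cuboids. -/
def IsCuboidPartition (F : Finset (Set (ℕ × ℕ × ℝ))) (L : Set (ℕ × ℕ × ℝ)) : Prop :=
  (∀ S ∈ F, IsCuboid S) ∧
  (F : Set (Set (ℕ × ℕ × ℝ))).Pairwise Disjoint ∧
  ⋃₀ (F : Set (Set (ℕ × ℕ × ℝ))) = L

/-!
The centres of the circles through `p a` and `p b` form the perpendicular bisector, parametrised
as `t ↦ midpoint + t • u`, and along it the power of any other point is an affine function of `t`.
So the parameters whose circle is empty for a window `P_{i,j}` form an interval, and so do the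
corresponding radii, i.e. the slice of `L^α_{ab}` at `(i, j)`. For fixed `i` these slices shrink
as `j` grows, so `L^α_{ab}` is cut into cuboids `{i} × (run of equal slices) × slice`. A run
starting at `j₀` is witnessed by a Delaunay triangle of `P_{i,j₀}` containing the edge and with
largest vertex `j₀` (push the centre until a constraint becomes tight). Hence each of the at most
`n - 1` values of `i` contributes at most as many cuboids as there are triangles on the edge, and
every triangle has at most three edges.
-/

open Module RealInnerProductSpace
open scoped Finset

section Bisector

variable {V : Type*} [NormedAddCommGroup V] [InnerProductSpace ℝ V]

theorem exists_norm_eq_one_inner_eq_zero (hV : finrank ℝ V = 2) (v : V) :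
    ∃ u : V, ‖u‖ = 1 ∧ ⟪u, v⟫ = 0 := by
  have : FiniteDimensional ℝ V := Module.finite_of_finrank_eq_succ hV
  have hne : (ℝ ∙ v)ᗮ ≠ ⊥ := by
    intro h
    have hsum := (ℝ ∙ v).finrank_add_finrank_orthogonal
    have hle := finrank_span_le_card (R := ℝ) ({v} : Set V)
    rw [h, finrank_bot, hV] at hsum
    simp only [Set.toFinset_singleton, Finset.card_singleton] at hle
    omega
  obtain ⟨w, hw, hw0⟩ := Submodule.exists_mem_ne_zero_of_ne_bot hne
  refine ⟨‖w‖⁻¹ • w, norm_smul_inv_norm hw0, ?_⟩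
  rw [real_inner_smul_left, real_inner_comm,
    Submodule.mem_orthogonal_singleton_iff_inner_right.mp hw, mul_zero]

theorem exists_eq_smul_of_inner_eq_zero (hV : finrank ℝ V = 2) {u v x : V} (hu : u ≠ 0)
    (hv : v ≠ 0) (huv : ⟪u, v⟫ = 0) (hux : ⟪u, x⟫ = 0) : ∃ s : ℝ, x = s • v := by
  have : FiniteDimensional ℝ V := Module.finite_of_finrank_eq_succ hV
  have : Fact (finrank ℝ V = 1 + 1) := ⟨hV⟩
  have hspan : ℝ ∙ v = (ℝ ∙ u)ᗮ :=
    Submodule.eq_of_le_of_finrank_eq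
      ((Submodule.span_singleton_le_iff_mem _ _).mpr
        (Submodule.mem_orthogonal_singleton_iff_inner_right.mpr huv))
      (by rw [finrank_span_singleton hv, Submodule.finrank_orthogonal_span_singleton (n := 1) hu])
  obtain ⟨s, hs⟩ := Submodule.mem_span_singleton.mp
    (hspan ▸ Submodule.mem_orthogonal_singleton_iff_inner_right.mpr hux)
  exact ⟨s, hs.symm⟩

variable (A B u : V)

noncomputable def bisectorPoint (t : ℝ) : V := midpoint ℝ A B + t • u

noncomputable def bisectorOffset (q : V) : ℝ :=
  dist (midpoint ℝ A B) q ^ 2 - dist (midpoint ℝ A B) A ^ 2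

noncomputable def bisectorSlope (q : V) : ℝ := 2 * ⟪u, A - q⟫

variable {A B u}

theorem dist_bisectorPoint_left_eq_right (huAB : ⟪u, B - A⟫ = 0) (t : ℝ) :
    dist (bisectorPoint A B u t) A = dist (bisectorPoint A B u t) B := by
  rw [← AffineSubspace.mem_perpBisector_iff_dist_eq,
    AffineSubspace.mem_perpBisector_iff_inner_eq_zero]
  simp [bisectorPoint, real_inner_smul_left, huAB]

theorem dist_bisectorPoint_sq_sub (huAB : ⟪u, B - A⟫ = 0) (t : ℝ) (q : V) :
    dist (bisectorPoint A B u t) q ^ 2 - dist (bisectorPoint A B u t) A ^ 2 =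
      bisectorOffset A B q + t * bisectorSlope A u q := by
  have hmA : midpoint ℝ A B - A = (2 : ℝ)⁻¹ • (B - A) := midpoint_vsub_left A B
  have key : ∀ x : V, dist (bisectorPoint A B u t) x ^ 2 =
      dist (midpoint ℝ A B) x ^ 2 + 2 * t * ⟪u, midpoint ℝ A B - x⟫ + t ^ 2 * ‖u‖ ^ 2 := by
    intro x
    rw [dist_eq_norm, dist_eq_norm, bisectorPoint, add_sub_right_comm, norm_add_sq_real,
      real_inner_smul_right, norm_smul, real_inner_comm, Real.norm_eq_abs, mul_pow, sq_abs]
    ring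
  have hA : ⟪u, midpoint ℝ A B - A⟫ = 0 := by rw [hmA, real_inner_smul_right, huAB, mul_zero]
  rw [key, key, hA, bisectorOffset, bisectorSlope]
  have : ⟪u, midpoint ℝ A B - q⟫ = ⟪u, midpoint ℝ A B - A⟫ + ⟪u, A - q⟫ := by
    rw [← inner_add_right, sub_add_sub_cancel]
  rw [this, hA]
  ring

theorem dist_bisectorPoint_le_iff (huAB : ⟪u, B - A⟫ = 0) (t : ℝ) (q : V) :
    dist (bisectorPoint A B u t) A ≤ dist (bisectorPoint A B u t) q ↔
      0 ≤ bisectorOffset A B q + t * bisectorSlope A u q := by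
  rw [← dist_bisectorPoint_sq_sub huAB, sub_nonneg,
    pow_le_pow_iff_left₀ dist_nonneg dist_nonneg two_ne_zero]

theorem dist_bisectorPoint_eq_iff (huAB : ⟪u, B - A⟫ = 0) (t : ℝ) (q : V) :
    dist (bisectorPoint A B u t) q = dist (bisectorPoint A B u t) A ↔
      bisectorOffset A B q + t * bisectorSlope A u q = 0 := by
  rw [← dist_bisectorPoint_sq_sub huAB, sub_eq_zero, sq_eq_sq₀ dist_nonneg dist_nonneg]

theorem bisectorSlope_left : bisectorSlope A u A = 0 := by simp [bisectorSlope]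

theorem bisectorSlope_right (huAB : ⟪u, B - A⟫ = 0) : bisectorSlope A u B = 0 := by
  rw [bisectorSlope, ← neg_sub, inner_neg_right, huAB, neg_zero, mul_zero]

theorem continuous_dist_bisectorPoint (q : V) :
    Continuous fun t => dist (bisectorPoint A B u t) q := by
  unfold bisectorPoint; fun_prop

theorem exists_eq_bisectorPoint (hV : finrank ℝ V = 2) (hAB : A ≠ B) (hu : u ≠ 0)
    (huAB : ⟪u, B - A⟫ = 0) {c : V} (hc : dist c A = dist c B) :
    ∃ t, c = bisectorPoint A B u t := by
  rw [← AffineSubspace.mem_perpBisector_iff_dist_eq,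
    AffineSubspace.mem_perpBisector_iff_inner_eq_zero, real_inner_comm] at hc
  obtain ⟨t, ht⟩ := exists_eq_smul_of_inner_eq_zero hV (sub_ne_zero.mpr hAB.symm) hu
    (by rwa [real_inner_comm]) hc
  exact ⟨t, by rw [bisectorPoint, ← ht, vsub_eq_sub, add_sub_cancel]⟩

theorem collinear_of_bisectorSlope_eq_zero (hV : finrank ℝ V = 2) (hAB : A ≠ B) (hu : u ≠ 0)
    (huAB : ⟪u, B - A⟫ = 0) {q : V} (hq : bisectorSlope A u q = 0) :
    Collinear ℝ ({A, B, q} : Set V) := by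
  have hAq : ⟪u, A - q⟫ = 0 := by
    rw [bisectorSlope] at hq; linarith
  obtain ⟨s, hs⟩ := exists_eq_smul_of_inner_eq_zero hV hu (sub_ne_zero.mpr hAB.symm) huAB hAq
  rw [collinear_iff_of_mem (Set.mem_insert A _)]
  refine ⟨B - A, ?_⟩
  rintro x (rfl | rfl | rfl)
  · exact ⟨0, by simp⟩
  · exact ⟨1, by simp⟩
  · exact ⟨-s, by rw [vadd_eq_add, neg_smul, ← hs]; abel⟩

end Bisector

section AffineConstraints

variable {ι : Type*} {s : Finset ι} {α β : ι → ℝ}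

theorem ordConnected_setOf_forall_nonneg_affine :
    {t : ℝ | ∀ m ∈ s, 0 ≤ α m + t * β m}.OrdConnected := by
  refine ⟨fun t₁ h₁ t₂ h₂ t ht m hm => ?_⟩
  have := h₁ m hm
  have := h₂ m hm
  rcases le_total 0 (β m) with hβ | hβ <;> nlinarith [ht.1, ht.2]

theorem exists_tight_of_slope_neg {t₀ : ℝ} (h₀ : ∀ m ∈ s, 0 ≤ α m + t₀ * β m)
    (hneg : ∃ m ∈ s, β m < 0) :
    ∃ t, (∀ m ∈ s, 0 ≤ α m + t * β m) ∧ ∃ m ∈ s, β m < 0 ∧ α m + t * β m = 0 := by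
  classical
  set N := s.filter fun m => β m < 0
  have hN : N.Nonempty := by simpa [N, Finset.filter_nonempty_iff] using hneg
  -- move `t` upwards until the first constraint with negative slope becomes tight
  set t := N.inf' hN fun m => -α m / β m
  have hle : ∀ m ∈ N, t * β m ≥ -α m := fun m hm =>
    (le_div_iff_of_neg (Finset.mem_filter.mp hm).2).mp (N.inf'_le _ hm)
  have ht₀ : t₀ ≤ t := N.le_inf' hN _ fun m hm => by
    have := h₀ m (Finset.mem_filter.mp hm).1
    rw [le_div_iff_of_neg (Finset.mem_filter.mp hm).2]
    linarith
  refine ⟨t, fun m hm => ?_, ?_⟩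
  · by_cases hβ : β m < 0
    · linarith [hle m (Finset.mem_filter.mpr ⟨hm, hβ⟩)]
    · nlinarith [h₀ m hm]
  · obtain ⟨m, hmN, hm⟩ := N.exists_mem_eq_inf' hN fun m => -α m / β m
    obtain ⟨hms, hβ⟩ := Finset.mem_filter.mp hmN
    refine ⟨m, hms, hβ, ?_⟩
    rw [show t = -α m / β m from hm, div_mul_cancel₀ _ hβ.ne]
    ring

theorem exists_tight_of_slope_ne_zero {t₀ : ℝ} (h₀ : ∀ m ∈ s, 0 ≤ α m + t₀ * β m) {k : ι}
    (hk : k ∈ s) (hβk : β k ≠ 0) :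
    ∃ t, (∀ m ∈ s, 0 ≤ α m + t * β m) ∧ ∃ m ∈ s, β m ≠ 0 ∧ α m + t * β m = 0 := by
  rcases hβk.lt_or_gt with hβk | hβk
  · obtain ⟨t, ht, m, hm, hβ, htight⟩ := exists_tight_of_slope_neg h₀ ⟨k, hk, hβk⟩
    exact ⟨t, ht, m, hm, hβ.ne, htight⟩
  · obtain ⟨t, ht, m, hm, hβ, htight⟩ := exists_tight_of_slope_neg (α := α) (β := fun m => -β m)
      (t₀ := -t₀) (fun m hm => by linarith [h₀ m hm]) ⟨k, hk, by linarith⟩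
    exact ⟨-t, fun m hm => by linarith [ht m hm], m, hm, by linarith, by linarith⟩

theorem exists_tight_between {t₀ t₁ : ℝ} {k : ι} (hk : k ∈ s)
    (h₀ : ∀ m ∈ s, 0 ≤ α m + t₀ * β m) (h₁ : ∀ m ∈ s, m ≠ k → 0 ≤ α m + t₁ * β m)
    (hk₁ : α k + t₁ * β k < 0) :
    ∃ t, (∀ m ∈ s, 0 ≤ α m + t * β m) ∧ α k + t * β k = 0 := by
  set g₀ := α k + t₀ * β k
  set g₁ := α k + t₁ * β k
  have hk₀ : 0 ≤ g₀ := h₀ k hk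
  have hden : 0 < g₀ - g₁ := by linarith
  -- the convex combination `(1 - λ) t₀ + λ t₁` at which the `k`-th constraint vanishes
  set lam := g₀ / (g₀ - g₁)
  have hlam₀ : 0 ≤ lam := div_nonneg hk₀ hden.le
  have hlam₁ : lam ≤ 1 := (div_le_one hden).mpr (by linarith)
  have hcomb : ∀ m, α m + ((1 - lam) * t₀ + lam * t₁) * β m =
      (1 - lam) * (α m + t₀ * β m) + lam * (α m + t₁ * β m) := fun m => by ring
  have htight : (1 - lam) * g₀ + lam * g₁ = 0 := by
    have : lam * (g₀ - g₁) = g₀ := div_mul_cancel₀ _ hden.ne'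
    linarith
  refine ⟨(1 - lam) * t₀ + lam * t₁, fun m hm => ?_, by rw [hcomb]; exact htight⟩
  rw [hcomb]
  by_cases hmk : m = k
  · subst hmk
    exact htight.ge
  · have := h₀ m hm
    have := h₁ m hm hmk
    have : 0 ≤ 1 - lam := by linarith
    positivity

end AffineConstraints

section Staircase

variable (L : Set (ℕ × ℕ × ℝ))

def slice (i j : ℕ) : Set ℝ := {α | (i, j, α) ∈ L}

open scoped Classical in
noncomputable def runStarts (b n i : ℕ) : Finset ℕ :=
  (Finset.Icc b n).filter fun j =>
    (slice L i j).Nonempty ∧ (j = b ∨ slice L i j ≠ slice L i (j - 1))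

def runCuboid (n i j₀ : ℕ) : Set (ℕ × ℕ × ℝ) :=
  {i} ×ˢ ({j | j₀ ≤ j ∧ j ≤ n ∧ slice L i j = slice L i j₀} ×ˢ slice L i j₀)

variable {L} {b n : ℕ}

theorem mem_runStarts {i j : ℕ} : j ∈ runStarts L b n i ↔
    (b ≤ j ∧ j ≤ n) ∧ (slice L i j).Nonempty ∧ (j = b ∨ slice L i j ≠ slice L i (j - 1)) := by
  classical
  simp [runStarts, Finset.mem_filter, Finset.mem_Icc]

theorem exists_runStarts_of_mem {i j : ℕ} {α : ℝ} (hj : b ≤ j) (hjn : j ≤ n)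
    (hα : (i, j, α) ∈ L) :
    ∃ j₀ ∈ runStarts L b n i, j₀ ≤ j ∧ slice L i j = slice L i j₀ := by
  classical
  have hP : ∃ j₀, b ≤ j₀ ∧ slice L i j₀ = slice L i j := ⟨j, hj, rfl⟩
  obtain ⟨hb₀, hs₀⟩ := Nat.find_spec hP
  have hle : Nat.find hP ≤ j := Nat.find_min' hP ⟨hj, rfl⟩
  refine ⟨Nat.find hP, mem_runStarts.mpr ⟨⟨hb₀, hle.trans hjn⟩, ⟨α, by rw [hs₀]; exact hα⟩, ?_⟩,
    hle, hs₀.symm⟩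
  by_cases hb : Nat.find hP = b
  · exact Or.inl hb
  · refine Or.inr fun heq => Nat.find_min hP (m := Nat.find hP - 1) (by omega) ⟨by omega, ?_⟩
    rw [← heq, hs₀]

variable (hanti : ∀ i j j', b ≤ j → j ≤ j' → slice L i j' ⊆ slice L i j)
include hanti

theorem slice_eq_of_le_of_le {i j₀ j j' : ℕ} (hb : b ≤ j₀) (h₀ : j₀ ≤ j) (h : j ≤ j')
    (heq : slice L i j' = slice L i j₀) : slice L i j = slice L i j₀ :=
  (hanti i j₀ j hb h₀).antisymm (heq ▸ hanti i j j' (hb.trans h₀) h)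

theorem isCuboid_runCuboid (hconn : ∀ i j, (slice L i j).OrdConnected) {i j₀ : ℕ}
    (hb : b ≤ j₀) : IsCuboid (runCuboid L n i j₀) := by
  refine ⟨_, _, _, Set.ordConnected_singleton, ⟨?_⟩, hconn i j₀, rfl⟩
  rintro j₁ ⟨h₀₁, -, -⟩ j₂ ⟨-, h₂n, h₂⟩ j ⟨h₁, h₂'⟩
  exact ⟨h₀₁.trans h₁, h₂'.trans h₂n, slice_eq_of_le_of_le hanti hb (h₀₁.trans h₁) h₂' h₂⟩

theorem eq_of_mem_runCuboid {x : ℕ × ℕ × ℝ} {i i' j₀ j₀' : ℕ}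
    (hj₀ : j₀ ∈ runStarts L b n i) (hj₀' : j₀' ∈ runStarts L b n i')
    (hx : x ∈ runCuboid L n i j₀) (hx' : x ∈ runCuboid L n i' j₀') : i = i' ∧ j₀ = j₀' := by
  obtain ⟨rfl, ⟨hle, -, heq⟩, -⟩ := hx
  obtain ⟨hii', ⟨hle', -, heq'⟩, -⟩ := hx'
  refine ⟨hii', ?_⟩
  subst hii'
  -- the later of two run starts would repeat the slice of its predecessor
  have key : ∀ {j₁ j₂}, j₁ ∈ runStarts L b n x.1 → j₂ ∈ runStarts L b n x.1 → j₁ < j₂ →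
      j₂ ≤ x.2.1 → slice L x.1 x.2.1 = slice L x.1 j₁ →
      slice L x.1 x.2.1 = slice L x.1 j₂ → False := by
    intro j₁ j₂ h₁ h₂ hlt hj₂ hs₁ hs₂
    obtain ⟨⟨hb₁, -⟩, -, -⟩ := mem_runStarts.mp h₁
    obtain ⟨-, -, hb₂ | hne⟩ := mem_runStarts.mp h₂
    · omega
    · refine hne ?_
      rw [slice_eq_of_le_of_le hanti hb₁ (Nat.le_sub_one_of_lt hlt) (by omega) hs₁, ← hs₁, hs₂]
  rcases lt_trichotomy j₀ j₀' with h | h | h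
  · exact (key hj₀ hj₀' h hle' heq heq').elim
  · exact h
  · exact (key hj₀' hj₀ h hle heq' heq).elim

theorem isCuboidPartition_runCuboids (I : Finset ℕ)
    (hL : ∀ x ∈ L, x.1 ∈ I ∧ b ≤ x.2.1 ∧ x.2.1 ≤ n) (hconn : ∀ i j, (slice L i j).OrdConnected) :
    IsCuboidPartition (I.biUnion fun i => (runStarts L b n i).image (runCuboid L n i)) L := by
  classical
  have mem : ∀ {S}, S ∈ I.biUnion (fun i => (runStarts L b n i).image (runCuboid L n i)) ↔
      ∃ i ∈ I, ∃ j₀ ∈ runStarts L b n i, runCuboid L n i j₀ = S := by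
    simp only [Finset.mem_biUnion, Finset.mem_image, implies_true]
  refine ⟨?_, ?_, ?_⟩
  · rintro S hS
    obtain ⟨i, -, j₀, hj₀, rfl⟩ := mem.mp hS
    exact isCuboid_runCuboid hanti hconn (mem_runStarts.mp hj₀).1.1
  · rintro S hS S' hS' hne
    obtain ⟨i, -, j₀, hj₀, rfl⟩ := mem.mp hS
    obtain ⟨i', -, j₀', hj₀', rfl⟩ := mem.mp hS'
    refine Set.disjoint_left.mpr fun x hx hx' => hne ?_
    obtain ⟨rfl, rfl⟩ := eq_of_mem_runCuboid hanti hj₀ hj₀' hx hx'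
    rfl
  · apply Set.Subset.antisymm
    · rintro x ⟨S, hS, hx⟩
      obtain ⟨i, -, j₀, -, rfl⟩ := mem.mp hS
      obtain ⟨rfl, ⟨-, -, heq⟩, hα⟩ := hx
      rw [← heq] at hα
      exact hα
    · rintro ⟨i, j, α⟩ hx
      obtain ⟨hi, hbj, hjn⟩ := hL _ hx
      obtain ⟨j₀, hj₀, hle, heq⟩ := exists_runStarts_of_mem hbj hjn hx
      exact ⟨_, mem.mpr ⟨i, hi, j₀, hj₀, rfl⟩, rfl, ⟨hle, hjn, heq⟩, heq ▸ hx⟩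

end Staircase

section Edge

variable {n : ℕ} {p : ℕ → Pt} {a b : ℕ} {u : Pt}

theorem finrank_pt : finrank ℝ Pt = 2 := finrank_euclideanSpace_fin

theorem GenPos.apply_ne (hgp : GenPos n p) (ha : 1 ≤ a) (hab : a < b) (hbn : b ≤ n) :
    p a ≠ p b :=
  hgp.1 a b ha (by omega) (by omega) hbn hab.ne

variable (p a b u) in
def emptyParams (i j : ℕ) : Set ℝ :=
  {t | ∀ m, i ≤ m → m ≤ j →
    dist (bisectorPoint (p a) (p b) u t) (p a) ≤ dist (bisectorPoint (p a) (p b) u t) (p m)}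

theorem mem_emptyParams_iff (huAB : ⟪u, p b - p a⟫ = 0) {i j : ℕ} {t : ℝ} :
    t ∈ emptyParams p a b u i j ↔ ∀ m ∈ Finset.Icc i j,
      0 ≤ bisectorOffset (p a) (p b) (p m) + t * bisectorSlope (p a) u (p m) := by
  simp only [emptyParams, Set.mem_ofPred_eq, Finset.mem_Icc, and_imp,
    dist_bisectorPoint_le_iff huAB]

theorem ordConnected_emptyParams (huAB : ⟪u, p b - p a⟫ = 0) (i j : ℕ) :
    (emptyParams p a b u i j).OrdConnected := by
  rw [show emptyParams p a b u i j = _ from Set.ext fun t => mem_emptyParams_iff huAB]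
  exact ordConnected_setOf_forall_nonneg_affine

theorem range_of_mem_activitySpace_pair {x : ℕ × ℕ × ℝ}
    (hx : x ∈ ActivitySpace n p {a, b}) : x.1 ∈ Finset.Icc 1 a ∧ b ≤ x.2.1 ∧ x.2.1 ≤ n := by
  obtain ⟨h1, hn, he, -⟩ := hx
  exact ⟨Finset.mem_Icc.mpr ⟨h1, (he a (by simp)).1⟩, (he b (by simp)).2, hn⟩

theorem slice_activitySpace_pair_antitone (hab : a ≤ b) (i : ℕ) {j j' : ℕ} (hbj : b ≤ j)
    (hjj' : j ≤ j') :
    slice (ActivitySpace n p {a, b}) i j' ⊆ slice (ActivitySpace n p {a, b}) i j := by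
  rintro α ⟨h1, hn, he, hα, c, hc, hemp⟩
  refine ⟨h1, hjj'.trans hn, fun k hk => ⟨(he k hk).1, ?_⟩, hα, c, hc,
    fun m him hmj => hemp m him (hmj.trans hjj')⟩
  rcases Finset.mem_insert.mp hk with h | h
  · rw [h]; exact hab.trans hbj
  · rw [Finset.mem_singleton.mp h]; exact hbj

theorem slice_activitySpace_pair_eq_image (hab : a < b) (hpab : p a ≠ p b) (hu : u ≠ 0)
    (huAB : ⟪u, p b - p a⟫ = 0) {i j : ℕ} (hi : 1 ≤ i) (hia : i ≤ a) (hbj : b ≤ j) (hjn : j ≤ n) :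
    slice (ActivitySpace n p {a, b}) i j =
      (fun t => dist (bisectorPoint (p a) (p b) u t) (p a)) '' emptyParams p a b u i j := by
  ext α
  constructor
  · rintro ⟨-, -, -, -, c, hc, hemp⟩
    have hca : dist c (p a) = α := hc a (by simp)
    obtain ⟨t, rfl⟩ := exists_eq_bisectorPoint finrank_pt hpab hu huAB
      (hca.trans (hc b (by simp)).symm)
    exact ⟨t, fun m him hmj => hca ▸ hemp m him hmj, hca⟩
  · rintro ⟨t, ht, rfl⟩
    have hAB := dist_bisectorPoint_left_eq_right huAB t
    have mem_pair : ∀ k ∈ ({a, b} : Finset ℕ), k = a ∨ k = b := by simp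
    refine ⟨hi, hjn, fun k hk => ?_, ?_, _, fun k hk => ?_, ht⟩
    · rcases mem_pair k hk with h | h <;> subst k <;> dsimp only <;> omega
    · refine dist_pos.mpr fun h => hpab ?_
      rwa [h, dist_self, eq_comm, dist_eq_zero] at hAB
    · rcases mem_pair k hk with h | h <;> subst k
      · rfl
      · exact hAB.symm

theorem ordConnected_slice_activitySpace_pair (hab : a < b) (hpab : p a ≠ p b) (hu : u ≠ 0)
    (huAB : ⟪u, p b - p a⟫ = 0) (i j : ℕ) :
    (slice (ActivitySpace n p {a, b}) i j).OrdConnected := by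
  rcases (slice (ActivitySpace n p {a, b}) i j).eq_empty_or_nonempty with h | ⟨α, hα⟩
  · rw [h]; exact Set.ordConnected_empty
  obtain ⟨hi, hbj, hjn⟩ := range_of_mem_activitySpace_pair hα
  obtain ⟨hi, hia⟩ := Finset.mem_Icc.mp hi
  rw [slice_activitySpace_pair_eq_image hab hpab hu huAB hi hia hbj hjn,
    ← isPreconnected_iff_ordConnected]
  exact (ordConnected_emptyParams huAB i j).isPreconnected.image _
    (continuous_dist_bisectorPoint _).continuousOn

theorem bisectorSlope_ne_zero_of_genPos (hgp : GenPos n p) (ha : 1 ≤ a) (hab : a < b)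
    (hbn : b ≤ n) (hu : u ≠ 0) (huAB : ⟪u, p b - p a⟫ = 0) {m : ℕ} (hm : 1 ≤ m) (hmn : m ≤ n)
    (hma : m ≠ a) (hmb : m ≠ b) : bisectorSlope (p a) u (p m) ≠ 0 := fun h =>
  hgp.2.1 a b m ha (by omega) (by omega) hbn hm hmn hab.ne (Ne.symm hma) (Ne.symm hmb)
    (collinear_of_bisectorSlope_eq_zero finrank_pt (hgp.apply_ne ha hab hbn) hu huAB h)

theorem isDelaunayTriangle_insert_of_tight (hab : a < b) (huAB : ⟪u, p b - p a⟫ = 0)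
    {i j m : ℕ} (hi : 1 ≤ i) (hia : i ≤ a) (hbj : b ≤ j) (hjn : j ≤ n) (him : i ≤ m) (hmj : m ≤ j)
    (hma : m ≠ a) (hmb : m ≠ b) {t : ℝ} (ht : t ∈ emptyParams p a b u i j)
    (htight :
      dist (bisectorPoint (p a) (p b) u t) (p m) = dist (bisectorPoint (p a) (p b) u t) (p a)) :
    IsDelaunayTriangle n p i j (insert m {a, b}) := by
  have mem_triple : ∀ k ∈ (insert m {a, b} : Finset ℕ), k = m ∨ k = a ∨ k = b := by simp
  refine ⟨hi, by omega, hjn, fun k hk => ?_, Or.inl ⟨?_, _, _, fun k hk => ?_, ht⟩⟩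
  · rcases mem_triple k hk with h | h | h <;> subst k <;> omega
  · rw [Finset.card_insert_of_notMem (by simp [hma, hmb]), Finset.card_pair hab.ne]
  · rcases mem_triple k hk with h | h | h <;> subst k
    · exact htight
    · rfl
    · exact (dist_bisectorPoint_left_eq_right huAB t).symm

theorem isDelaunayTriangle_pair (hab : a < b) (hu : ‖u‖ = 1) (huAB : ⟪u, p b - p a⟫ = 0)
    {i j : ℕ} (hi : 1 ≤ i) (hia : i ≤ a) (hbj : b ≤ j) (hjn : j ≤ n)
    (hwin : ∀ m, i ≤ m → m ≤ j → m = a ∨ m = b) : IsDelaunayTriangle n p i j {a, b} := by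
  have mem_pair : ∀ k ∈ ({a, b} : Finset ℕ), k = a ∨ k = b := by simp
  have huBA : ⟪u, p a - p b⟫ = 0 := by rw [← neg_sub, inner_neg_right, huAB, neg_zero]
  refine ⟨hi, by omega, hjn, fun k hk => ?_, Or.inr ⟨Finset.card_pair hab.ne, u, hu,
    fun k hk l hl => ?_, fun k _ m him hmj hm => (hm ?_).elim⟩⟩
  · rcases mem_pair k hk with h | h <;> subst k <;> omega
  · rcases mem_pair k hk with h | h <;> rcases mem_pair l hl with h' | h' <;> subst k l <;>
      simp [huAB, huBA]
  · rcases hwin m him hmj with h | h <;> simp [h]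

theorem exists_isDelaunayTriangle_of_slice_nonempty (hgp : GenPos n p) (hab : a < b)
    (hbn : b ≤ n) (hu : ‖u‖ = 1) (huAB : ⟪u, p b - p a⟫ = 0) {i : ℕ}
    (hne : (slice (ActivitySpace n p {a, b}) i b).Nonempty) :
    ∃ t, IsDelaunayTriangle n p i b t ∧ {a, b} ⊆ t := by
  obtain ⟨α, hα⟩ := hne
  obtain ⟨hi, -, -⟩ := range_of_mem_activitySpace_pair hα
  obtain ⟨hi, hia⟩ := Finset.mem_Icc.mp hi
  have hu0 : u ≠ 0 := ne_zero_of_norm_ne_zero (hu ▸ one_ne_zero)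
  rw [slice_activitySpace_pair_eq_image hab (hgp.apply_ne (by omega) hab hbn) hu0 huAB hi hia le_rfl
    hbn] at hα
  obtain ⟨t₀, ht₀, -⟩ := hα
  by_cases hother : ∃ m, i ≤ m ∧ m ≤ b ∧ m ≠ a ∧ m ≠ b
  · obtain ⟨m, him, hmb, hma, hmb'⟩ := hother
    obtain ⟨t, ht, k, hk, hslope, htight⟩ := exists_tight_of_slope_ne_zero
      ((mem_emptyParams_iff huAB).mp ht₀) (Finset.mem_Icc.mpr ⟨him, hmb⟩)
      (bisectorSlope_ne_zero_of_genPos hgp (by omega) hab hbn hu0 huAB (by omega) (by omega)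
        hma hmb')
    obtain ⟨hik, hkb⟩ := Finset.mem_Icc.mp hk
    have hka : k ≠ a := by rintro rfl; exact hslope bisectorSlope_left
    have hkb' : k ≠ b := by rintro rfl; exact hslope (bisectorSlope_right huAB)
    exact ⟨_, isDelaunayTriangle_insert_of_tight hab huAB hi hia le_rfl hbn hik hkb hka hkb'
      ((mem_emptyParams_iff huAB).mpr ht) ((dist_bisectorPoint_eq_iff huAB _ _).mpr htight),
      Finset.subset_insert _ _⟩
  · push Not at hother
    refine ⟨_, isDelaunayTriangle_pair hab hu huAB hi hia le_rfl hbn fun m him hmb => ?_, le_rfl⟩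
    by_cases hma : m = a
    · exact Or.inl hma
    · exact Or.inr (hother m him hmb hma)

theorem isDelaunayTriangle_of_slice_ne (hab : a < b) (hpab : p a ≠ p b) (hu : u ≠ 0)
    (huAB : ⟪u, p b - p a⟫ = 0) {i j : ℕ} (hbj : b ≤ j) (hjn : j + 1 ≤ n)
    (hne : (slice (ActivitySpace n p {a, b}) i (j + 1)).Nonempty)
    (hdiff : slice (ActivitySpace n p {a, b}) i (j + 1) ≠ slice (ActivitySpace n p {a, b}) i j) :
    IsDelaunayTriangle n p i (j + 1) (insert (j + 1) {a, b}) := by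
  obtain ⟨α₀, hα₀⟩ := hne
  obtain ⟨hi, -, -⟩ := range_of_mem_activitySpace_pair hα₀
  obtain ⟨hi, hia⟩ := Finset.mem_Icc.mp hi
  obtain ⟨α, hα, hα'⟩ := Set.exists_of_ssubset
    (ssubset_of_subset_of_ne (slice_activitySpace_pair_antitone hab.le i hbj j.le_succ) hdiff)
  rw [slice_activitySpace_pair_eq_image hab hpab hu huAB hi hia hbj (by omega)] at hα
  rw [slice_activitySpace_pair_eq_image hab hpab hu huAB hi hia (by omega) hjn] at hα₀ hα'
  obtain ⟨t₀, ht₀, -⟩ := hα₀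
  obtain ⟨t₁, ht₁, rfl⟩ := hα
  have h₁ := (mem_emptyParams_iff huAB).mp ht₁
  have h₁' : ∀ m ∈ Finset.Icc i (j + 1), m ≠ j + 1 →
      0 ≤ bisectorOffset (p a) (p b) (p m) + t₁ * bisectorSlope (p a) u (p m) := by
    intro m hm hmj
    obtain ⟨him, hmj'⟩ := Finset.mem_Icc.mp hm
    exact h₁ m (Finset.mem_Icc.mpr ⟨him, by omega⟩)
  -- `t₁` works for the window `P_{i,j}` but not for `P_{i,j+1}`, so `p (j + 1)` is the obstruction
  have hk₁ :
      bisectorOffset (p a) (p b) (p (j + 1)) + t₁ * bisectorSlope (p a) u (p (j + 1)) < 0 := by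
    by_contra! h
    refine hα' ⟨t₁, (mem_emptyParams_iff huAB).mpr fun m hm => ?_, rfl⟩
    by_cases hmj : m = j + 1
    · rwa [hmj]
    · exact h₁' m hm hmj
  obtain ⟨t, ht, htight⟩ := exists_tight_between (Finset.mem_Icc.mpr ⟨by omega, le_rfl⟩)
    ((mem_emptyParams_iff huAB).mp ht₀) h₁' hk₁
  exact isDelaunayTriangle_insert_of_tight hab huAB hi hia (by omega) hjn (by omega) le_rfl
    (by omega) (by omega) ((mem_emptyParams_iff huAB).mpr ht)
    ((dist_bisectorPoint_eq_iff huAB _ _).mpr htight)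

theorem exists_isDelaunayTriangle_of_mem_runStarts (hgp : GenPos n p) (ha : 1 ≤ a) (hab : a < b)
    (hbn : b ≤ n) (hu : ‖u‖ = 1) (huAB : ⟪u, p b - p a⟫ = 0) {i j₀ : ℕ}
    (hj₀ : j₀ ∈ runStarts (ActivitySpace n p {a, b}) b n i) :
    ∃ t, IsDelaunayTriangle n p i j₀ t ∧ {a, b} ⊆ t ∧ j₀ ∈ t := by
  obtain ⟨⟨hbj₀, hj₀n⟩, hne, hstart⟩ := mem_runStarts.mp hj₀
  rcases eq_or_ne j₀ b with rfl | hj₀b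
  · obtain ⟨t, ht, het⟩ := exists_isDelaunayTriangle_of_slice_nonempty hgp hab hbn hu huAB hne
    exact ⟨t, ht, het, het (by simp)⟩
  · obtain ⟨j, rfl⟩ : ∃ j, j₀ = j + 1 := ⟨j₀ - 1, by omega⟩
    have hdiff := hstart.resolve_left hj₀b
    refine ⟨_, isDelaunayTriangle_of_slice_ne hab (hgp.apply_ne ha hab hbn)
      (ne_zero_of_norm_ne_zero (hu ▸ one_ne_zero)) huAB (by omega) hj₀n hne hdiff,
      Finset.subset_insert _ _, Finset.mem_insert_self _ _⟩

theorem card_runStarts_le (hgp : GenPos n p) (ha : 1 ≤ a) (hab : a < b) (hbn : b ≤ n)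
    (hu : ‖u‖ = 1) (huAB : ⟪u, p b - p a⟫ = 0) {Ts : Finset (Finset ℕ)}
    (hTs : (Ts : Set (Finset ℕ)) = TriSet n p) (i : ℕ) :
    #(runStarts (ActivitySpace n p {a, b}) b n i) ≤ #{t ∈ Ts | {a, b} ⊆ t} := by
  classical
  -- a run start `j₀` is the largest vertex of a Delaunay triangle of `P_{i,j₀}` containing the edge
  refine (Finset.card_le_card fun j₀ hj₀ => ?_).trans
    (Finset.card_image_le (f := fun t => t.sup id))
  obtain ⟨t, ht, het, hj₀t⟩ :=
    exists_isDelaunayTriangle_of_mem_runStarts hgp ha hab hbn hu huAB hj₀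
  refine Finset.mem_image.mpr ⟨t, Finset.mem_filter.mpr ⟨?_, het⟩, ?_⟩
  · rw [← Finset.mem_coe, hTs]
    exact ⟨i, j₀, ht⟩
  · exact (Finset.sup_le fun k hk => (ht.2.2.2.1 k hk).2).antisymm (Finset.le_sup (f := id) hj₀t)

theorem exists_cuboidPartition_activitySpace_pair (hgp : GenPos n p) (ha : 1 ≤ a) (hab : a < b)
    (hbn : b ≤ n) {Ts : Finset (Finset ℕ)} (hTs : (Ts : Set (Finset ℕ)) = TriSet n p) :
    ∃ F, IsCuboidPartition F (ActivitySpace n p {a, b}) ∧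
      #F ≤ (n - 1) * #{t ∈ Ts | {a, b} ⊆ t} := by
  classical
  obtain ⟨u, hu, huAB⟩ := exists_norm_eq_one_inner_eq_zero finrank_pt (p b - p a)
  refine ⟨_, isCuboidPartition_runCuboids (slice_activitySpace_pair_antitone hab.le)
    (Finset.Icc 1 a) (fun x hx => range_of_mem_activitySpace_pair hx)
    (ordConnected_slice_activitySpace_pair hab (hgp.apply_ne ha hab hbn)
      (ne_zero_of_norm_ne_zero (hu ▸ one_ne_zero)) huAB),
    ?_⟩
  calc _ ≤ ∑ i ∈ Finset.Icc 1 a, #(runStarts (ActivitySpace n p {a, b}) b n i) :=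
        Finset.card_biUnion_le.trans (Finset.sum_le_sum fun i _ => Finset.card_image_le)
    _ ≤ ∑ i ∈ Finset.Icc 1 a, #{t ∈ Ts | {a, b} ⊆ t} :=
        Finset.sum_le_sum fun i _ => card_runStarts_le hgp ha hab hbn hu huAB hTs i
    _ ≤ (n - 1) * #{t ∈ Ts | {a, b} ⊆ t} := by
        rw [Finset.sum_const, Nat.card_Icc, smul_eq_mul]
        exact Nat.mul_le_mul_right _ (by omega)

end Edge

theorem subset_Icc_of_mem_triSet {n : ℕ} {p : ℕ → Pt} {t : Finset ℕ} (ht : t ∈ TriSet n p) :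
    t ⊆ Finset.Icc 1 n := fun k hk => by
  obtain ⟨i, j, hi, -, hjn, hwin, -⟩ := ht
  exact Finset.mem_Icc.mpr ⟨hi.trans (hwin k hk).1, (hwin k hk).2.trans hjn⟩

theorem card_le_three_of_mem_triSet {n : ℕ} {p : ℕ → Pt} {t : Finset ℕ} (ht : t ∈ TriSet n p) :
    #t ≤ 3 := by
  obtain ⟨i, j, -, -, -, -, ⟨h, -⟩ | ⟨h, -⟩⟩ := ht <;> omega

theorem finite_triSet (n : ℕ) (p : ℕ → Pt) : (TriSet n p).Finite :=
  (Finset.Icc 1 n).powerset.finite_toSet.subset fun _ ht =>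
    Finset.mem_powerset.mpr (subset_Icc_of_mem_triSet ht)

theorem finite_edgeSet (n : ℕ) (p : ℕ → Pt) : (EdgeSet n p).Finite :=
  (Finset.Icc 1 n).powerset.finite_toSet.subset fun _ ⟨_, _, ht, het⟩ =>
    Finset.mem_powerset.mpr (het.trans (subset_Icc_of_mem_triSet ht))

theorem exists_cuboidPartition_activitySpace {n : ℕ} {p : ℕ → Pt} (hgp : GenPos n p)
    {Ts : Finset (Finset ℕ)} (hTs : (Ts : Set (Finset ℕ)) = TriSet n p) {e : Finset ℕ}
    (he : e ∈ EdgeSet n p) :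
    ∃ F, IsCuboidPartition F (ActivitySpace n p e) ∧ #F ≤ (n - 1) * #{t ∈ Ts | e ⊆ t} := by
  obtain ⟨hcard, t, ht, het⟩ := he
  obtain ⟨x, y, hxy, rfl⟩ := Finset.card_eq_two.mp hcard
  have hx := Finset.mem_Icc.mp (subset_Icc_of_mem_triSet ht (het (by simp : x ∈ {x, y})))
  have hy := Finset.mem_Icc.mp (subset_Icc_of_mem_triSet ht (het (by simp : y ∈ {x, y})))
  rcases hxy.lt_or_gt with h | h
  · exact exists_cuboidPartition_activitySpace_pair hgp hx.1 h hy.2 hTs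
  · rw [Finset.pair_comm]
    exact exists_cuboidPartition_activitySpace_pair hgp hy.1 h hx.2 hTs

theorem card_filter_subset_le_three {n : ℕ} {p : ℕ → Pt} {Es : Finset (Finset ℕ)}
    (hEs : (Es : Set (Finset ℕ)) = EdgeSet n p) {t : Finset ℕ} (ht : t ∈ TriSet n p) :
    #{e ∈ Es | e ⊆ t} ≤ 3 := by
  have hsub : {e ∈ Es | e ⊆ t} ⊆ t.powersetCard 2 := fun e he => by
    obtain ⟨heEs, het⟩ := Finset.mem_filter.mp he
    rw [← Finset.mem_coe, hEs] at heEs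
    exact Finset.mem_powersetCard.mpr ⟨het, heEs.1⟩
  refine (Finset.card_le_card hsub).trans ?_
  rw [Finset.card_powersetCard]
  have := card_le_three_of_mem_triSet ht
  interval_cases #t <;> decide

/-- `|α_T| ∈ O(n · |T|)`: for each edge `e` of a triangle of `T` there is a
finite partition of `L^α_e` into cuboids such that the total number of cuboids over all
such edges is at most `3 · (n − 1) · |T|`. -/
theorem stmt0 (n : ℕ) (p : ℕ → Pt) (hgp : GenPos n p) :
    ∃ Ts Es : Finset (Finset ℕ), (Ts : Set (Finset ℕ)) = TriSet n p ∧
      (Es : Set (Finset ℕ)) = EdgeSet n p ∧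
      ∃ F : Finset ℕ → Finset (Set (ℕ × ℕ × ℝ)),
        (∀ e ∈ Es, IsCuboidPartition (F e) (ActivitySpace n p e)) ∧
        ∑ e ∈ Es, (F e).card ≤ 3 * (n - 1) * Ts.card := by
  classical
  set Ts := (finite_triSet n p).toFinset
  set Es := (finite_edgeSet n p).toFinset
  have hTs : (Ts : Set (Finset ℕ)) = TriSet n p := Set.Finite.coe_toFinset _
  have hEs : (Es : Set (Finset ℕ)) = EdgeSet n p := Set.Finite.coe_toFinset _
  choose! F hF hcard using fun e (he : e ∈ Es) =>
    exists_cuboidPartition_activitySpace hgp hTs (Set.Finite.mem_toFinset _ |>.mp he)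
  refine ⟨Ts, Es, hTs, hEs, F, hF, ?_⟩
  calc ∑ e ∈ Es, #(F e) ≤ ∑ e ∈ Es, (n - 1) * #{t ∈ Ts | e ⊆ t} := Finset.sum_le_sum hcard
    _ = (n - 1) * ∑ t ∈ Ts, #{e ∈ Es | e ⊆ t} := by
      rw [← Finset.mul_sum]
      exact congrArg _ (Finset.sum_card_bipartiteAbove_eq_sum_card_bipartiteBelow _)
    _ ≤ (n - 1) * ∑ t ∈ Ts, 3 := Nat.mul_le_mul_left _ <| Finset.sum_le_sum fun t ht =>
      card_filter_subset_le_three hEs (Set.Finite.mem_toFinset _ |>.mp ht)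
    _ = 3 * (n - 1) * #Ts := by rw [Finset.sum_const, smul_eq_mul]; ring
end

section
/- Let t be a triangle with vertex indices a < b < c that is a Delaunay triangle of at least one time window, let C be its open circumdisk, let i_lower = a and i_upper = c, let i_before be the largest index k < i_lower with p_k ∈ C (or 0 if none exists), and let i_after be the smallest index k > i_upper with p_k ∈ C (or n+1 if none exists). Then for all 1 ≤ i ≤ j ≤ n, t is a Delaunay triangle of the time window P_{i,j} if and only if i_before < i ≤ i_lower and i_upper ≤ j < i_after; i.e., the Delaunay activity space L^D_t is the rectangle ]i_before, i_lower] × [i_upper, i_after[. -/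
open Metric

/-- The triangle with vertex indices `a, b, c` is a Delaunay triangle of the time window
`P_{i,j}`: all vertex indices lie in `[i, j]` and the open circumdisk of the three vertices
contains no point of `P_{i,j}`. -/
def IsDelaunayTri (n : ℕ) (p : ℕ → Pt) (i j a b c : ℕ) : Prop :=
  1 ≤ i ∧ i ≤ j ∧ j ≤ n ∧ i ≤ a ∧ a ≤ j ∧ i ≤ b ∧ b ≤ j ∧ i ≤ c ∧ c ≤ j ∧
  ∃ (o : Pt) (r : ℝ), dist o (p a) = r ∧ dist o (p b) = r ∧ dist o (p c) = r ∧
    ∀ m : ℕ, i ≤ m → m ≤ j → r ≤ dist o (p m)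

/-!
Three distinct points of the plane lie on at most one circle, so any window in which `t` is
Delaunay witnesses the given disk `C` as empty. Hence `t` is Delaunay in `P_{i,j}` exactly
when `i ≤ a`, `c ≤ j` and no point of `P_{i,j}` lies in `C`. The points with indices in
`[a, c]` never lie in `C`, since they belong to the window in which `t` is Delaunay; those of
`P_{i,a-1}` avoid `C` iff `i_before < i`, and those of `P_{c+1,j}` iff `j < i_after`.
-/

open Module EuclideanGeometry in
theorem center_eq_of_dist_eq_of_finrank_eq_two {V P : Type*} [NormedAddCommGroup V]
    [InnerProductSpace ℝ V] [MetricSpace P] [NormedAddTorsor V P] [FiniteDimensional ℝ V]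
    (hd : finrank ℝ V = 2) {A B C o o' : P} {r r' : ℝ}
    (hAB : A ≠ B) (hAC : A ≠ C) (hBC : B ≠ C)
    (hA : dist o A = r) (hB : dist o B = r) (hC : dist o C = r)
    (hA' : dist o' A = r') (hB' : dist o' B = r') (hC' : dist o' C = r') : o = o' := by
  by_contra hne
  rw [dist_comm] at hA hB hC hA' hB' hC'
  rcases eq_of_dist_eq_of_dist_eq_of_finrank_eq_two hd hne hAB hA hB hC hA' hB' hC' with h | h
  exacts [hAC h.symm, hBC h.symm]

section Windows

variable {P : ℕ → Prop} {a c i j n ib ia : ℕ}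

theorem forall_not_below_iff_lt
    (hib : (ib = 0 ∧ ∀ k : ℕ, 1 ≤ k → k < a → ¬ P k) ∨
           (1 ≤ ib ∧ ib < a ∧ P ib ∧ ∀ k : ℕ, ib < k → k < a → ¬ P k))
    (hi : 1 ≤ i) : (∀ k, i ≤ k → k < a → ¬ P k) ↔ ib < i := by
  rcases hib with ⟨rfl, hall⟩ | ⟨-, hiba, hPib, hall⟩
  · exact ⟨fun _ => hi, fun _ k hik hka => hall k (hi.trans hik) hka⟩
  · refine ⟨fun h => ?_, fun hlt k hik hka => hall k (hlt.trans_le hik) hka⟩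
    by_contra! hle
    exact h ib hle hiba hPib

theorem forall_not_above_iff_lt
    (hia : (ia = n + 1 ∧ ∀ k : ℕ, c < k → k ≤ n → ¬ P k) ∨
           (c < ia ∧ ia ≤ n ∧ P ia ∧ ∀ k : ℕ, c < k → k < ia → ¬ P k))
    (hj : j ≤ n) : (∀ k, c < k → k ≤ j → ¬ P k) ↔ j < ia := by
  rcases hia with ⟨rfl, hall⟩ | ⟨hcia, -, hPia, hall⟩
  · exact ⟨fun _ => Nat.lt_succ_of_le hj, fun _ k hck hkj => hall k hck (hkj.trans hj)⟩
  · refine ⟨fun h => ?_, fun hlt k hck hkj => hall k hck (hkj.trans_lt hlt)⟩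
    by_contra! hle
    exact h ia hcia hle hPia

end Windows

theorem isDelaunayTri_iff {n : ℕ} {p : ℕ → Pt} {i j a b c : ℕ} (hab : a < b) (hbc : b < c)
    (hpab : p a ≠ p b) (hpac : p a ≠ p c) (hpbc : p b ≠ p c) {o : Pt} {r : ℝ}
    (hoa : dist o (p a) = r) (hob : dist o (p b) = r) (hoc : dist o (p c) = r) :
    IsDelaunayTri n p i j a b c ↔
      1 ≤ i ∧ i ≤ j ∧ j ≤ n ∧ i ≤ a ∧ c ≤ j ∧
        ∀ m, i ≤ m → m ≤ j → ¬ dist o (p m) < r := by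
  constructor
  · rintro ⟨hi, hij, hj, hi_a, -, -, -, -, hc_j, o', r', ho'a, ho'b, ho'c, hempty⟩
    have hoo' : o = o' := center_eq_of_dist_eq_of_finrank_eq_two finrank_euclideanSpace_fin
      hpab hpac hpbc hoa hob hoc ho'a ho'b ho'c
    subst hoo'
    obtain rfl : r = r' := hoa.symm.trans ho'a
    exact ⟨hi, hij, hj, hi_a, hc_j, fun m him hmj => not_lt.2 (hempty m him hmj)⟩
  · rintro ⟨hi, hij, hj, hi_a, hc_j, hempty⟩
    exact ⟨hi, hij, hj, hi_a, by omega, by omega, by omega, by omega, hc_j, o, r, hoa, hob, hoc,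
      fun m him hmj => not_lt.1 (hempty m him hmj)⟩

/-- The Delaunay activity space of a triangle `t` with vertex indices
`a < b < c`, circumcircle of center `o` and radius `r`, which is a Delaunay triangle of at
least one time window, is the rectangle `]i_before, a] × [c, i_after[`, where `i_before`
is the largest index `< a` of a point inside the circumdisk (or `0` if none) and `i_after`
is the smallest index `> c` of a point inside the circumdisk (or `n + 1` if none). -/
theorem stmt2 (n : ℕ) (p : ℕ → Pt) (hgp : GenPos n p)
    (a b c : ℕ) (ha : 1 ≤ a) (hab : a < b) (hbc : b < c) (hcn : c ≤ n)
    (o : Pt) (r : ℝ)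
    (hoa : dist o (p a) = r) (hob : dist o (p b) = r) (hoc : dist o (p c) = r)
    (hDel : ∃ i j : ℕ, IsDelaunayTri n p i j a b c)
    (ib ia : ℕ)
    (hib : (ib = 0 ∧ ∀ k : ℕ, 1 ≤ k → k < a → ¬ dist o (p k) < r) ∨
           (1 ≤ ib ∧ ib < a ∧ dist o (p ib) < r ∧
             ∀ k : ℕ, ib < k → k < a → ¬ dist o (p k) < r))
    (hia : (ia = n + 1 ∧ ∀ k : ℕ, c < k → k ≤ n → ¬ dist o (p k) < r) ∨
           (c < ia ∧ ia ≤ n ∧ dist o (p ia) < r ∧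
             ∀ k : ℕ, c < k → k < ia → ¬ dist o (p k) < r))
    (i j : ℕ) (hi : 1 ≤ i) (hij : i ≤ j) (hj : j ≤ n) :
    IsDelaunayTri n p i j a b c ↔ (ib < i ∧ i ≤ a ∧ c ≤ j ∧ j < ia) := by
  have hpab : p a ≠ p b := hgp.1 a b ha (by omega) (by omega) (by omega) hab.ne
  have hpac : p a ≠ p c := hgp.1 a c ha (by omega) (by omega) hcn (by omega)
  have hpbc : p b ≠ p c := hgp.1 b c (by omega) (by omega) (by omega) hcn hbc.ne
  have hDel_iff {i j : ℕ} := isDelaunayTri_iff (n := n) (i := i) (j := j)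
    hab hbc hpab hpac hpbc hoa hob hoc
  obtain ⟨i₀, j₀, hDel₀⟩ := hDel
  obtain ⟨-, -, -, hi₀_a, hc_j₀, hempty₀⟩ := hDel_iff.1 hDel₀
  rw [hDel_iff, ← forall_not_below_iff_lt hib hi, ← forall_not_above_iff_lt hia hj]
  constructor
  · rintro ⟨-, -, -, hi_a, hc_j, hempty⟩
    exact ⟨fun k hik hka => hempty k hik (by omega), hi_a, hc_j,
      fun k hck hkj => hempty k (by omega) hkj⟩
  · rintro ⟨hbelow, hi_a, hc_j, habove⟩
    refine ⟨hi, hij, hj, hi_a, hc_j, fun m him hmj => ?_⟩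
    rcases lt_or_ge m a with hma | ham
    · exact hbelow m him hma
    rcases le_or_gt m c with hmc | hcm
    · exact hempty₀ m (hi₀_a.trans ham) (hmc.trans hc_j₀)
    · exact habove m hcm hmj
end

section
/- Let Q be a finite set of points in ℝ² and let p, q ∈ Q be distinct. Then there is NO open disk with p and q on its boundary containing no point of Q if and only if there exist points x, y ∈ Q \ {p, q} (possibly x = y) such that every open disk with p and q on its boundary contains x or contains y in its interior. -/
open Metric

/-! The centres of the disks through `p` and `q` form a line `t ↦ t • v +ᵥ m` (the
perpendicular bisector), and along that line the test `dist c z < dist c p` is an affine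
inequality `a z + t * b z < 0` in `t`. Each point of `Q` thus contributes an open half-line, a
line, or nothing. If finitely many open half-lines cover `ℝ`, the one reaching furthest to the
right among those unbounded to the left, together with the half-line covering its endpoint,
already cover `ℝ`. -/

open Module AffineSubspace

lemma add_mul_neg_iff {a b t : ℝ} (h : b = 0 → 0 ≤ a) :
    a + t * b < 0 ↔ (0 < b ∧ t < -a / b) ∨ (b < 0 ∧ -a / b < t) := by
  rcases lt_trichotomy b 0 with hb | rfl | hb
  · simp only [hb, hb.not_gt, div_lt_iff_of_neg hb, false_and, true_and, false_or]
    constructor <;> intro <;> linarith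
  · simp [h rfl]
  · simp only [hb, hb.not_gt, lt_div_iff₀ hb, false_and, true_and, or_false]
    constructor <;> intro <;> linarith

theorem exists_pair_forall_add_mul_neg {ι : Type*} {S : Set ι} (hS : S.Finite) (a b : ι → ℝ)
    (h : ∀ t : ℝ, ∃ i ∈ S, a i + t * b i < 0) :
    ∃ i ∈ S, ∃ j ∈ S, ∀ t : ℝ, a i + t * b i < 0 ∨ a j + t * b j < 0 := by
  by_cases hconst : ∃ i ∈ S, b i = 0 ∧ a i < 0
  · obtain ⟨i, hi, hb, ha⟩ := hconst
    exact ⟨i, hi, i, hi, fun t => Or.inl (by simpa [hb])⟩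
  push Not at hconst
  set r : ι → ℝ := fun i => -a i / b i
  have key : ∀ i ∈ S, ∀ t,
      a i + t * b i < 0 ↔ (0 < b i ∧ t < r i) ∨ (b i < 0 ∧ r i < t) :=
    fun i hi _ => add_mul_neg_iff (hconst i hi)
  obtain ⟨m, hm⟩ := (hS.image r).bddBelow
  have hpos : {i ∈ S | 0 < b i}.Nonempty := by
    obtain ⟨i, hi, hit⟩ := h (m - 1)
    rcases (key i hi _).1 hit with hb | ⟨-, hlt⟩
    · exact ⟨i, hi, hb.1⟩
    · linarith [hm (Set.mem_image_of_mem r hi)]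
  obtain ⟨x, ⟨hx, hbx⟩, hmax⟩ := Set.exists_max_image _ r (hS.sep _) hpos
  obtain ⟨y, hy, hyx⟩ := h (r x)
  obtain ⟨hby, hry⟩ : b y < 0 ∧ r y < r x := by
    rcases (key y hy _).1 hyx with ⟨hb, hlt⟩ | hneg
    · exact absurd (hmax y ⟨hy, hb⟩) hlt.not_ge
    · exact hneg
  refine ⟨x, hx, y, hy, fun t => (lt_or_ge t (r x)).imp (fun ht => ?_) (fun ht => ?_)⟩
  · exact (key x hx t).2 (Or.inl ⟨hbx, ht⟩)
  · exact (key y hy t).2 (Or.inr ⟨hby, hry.trans_le ht⟩)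

section Euclidean

variable {V P : Type*} [NormedAddCommGroup V] [InnerProductSpace ℝ V] [MetricSpace P]
  [NormedAddTorsor V P]

lemma dist_vadd_sq_sub_dist_vadd_sq (v : V) (m p z : P) (t : ℝ) :
    dist (t • v +ᵥ m) z ^ 2 - dist (t • v +ᵥ m) p ^ 2 =
      dist m z ^ 2 - dist m p ^ 2 + t * (2 * inner ℝ v (p -ᵥ z)) := by
  have hpz : p -ᵥ z = (m -ᵥ z) - (m -ᵥ p) := (vsub_sub_vsub_cancel_left p z m).symm
  simp only [dist_eq_norm_vsub V, vadd_vsub_assoc, norm_add_sq_real, real_inner_smul_left,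
    hpz, inner_sub_right]
  ring

lemma dist_vadd_lt_dist_vadd_iff (v : V) (m p z : P) (t : ℝ) :
    dist (t • v +ᵥ m) z < dist (t • v +ᵥ m) p ↔
      dist m z ^ 2 - dist m p ^ 2 + t * (2 * inner ℝ v (p -ᵥ z)) < 0 := by
  rw [← dist_vadd_sq_sub_dist_vadd_sq, sub_neg,
    pow_lt_pow_iff_left₀ dist_nonneg dist_nonneg two_ne_zero]

theorem exists_forall_dist_eq_iff_eq_vadd_midpoint (hV : finrank ℝ V = 2) {p q : P}
    (hpq : p ≠ q) :
    ∃ v : V, ∀ c, dist c p = dist c q ↔ ∃ t : ℝ, c = t • v +ᵥ midpoint ℝ p q := by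
  have : Fact (finrank ℝ V = 1 + 1) := ⟨hV⟩
  obtain ⟨v, -, hv⟩ := finrank_eq_one_iff'.1 <|
    Submodule.finrank_orthogonal_span_singleton (𝕜 := ℝ) (vsub_ne_zero.2 hpq.symm)
  refine ⟨v, fun c => ?_⟩
  rw [← mem_perpBisector_iff_dist_eq, ← vsub_right_mem_direction_iff_mem
    (midpoint_mem_perpBisector p q), direction_perpBisector]
  constructor
  · intro hc
    obtain ⟨t, ht⟩ := hv ⟨_, hc⟩
    exact ⟨t, (eq_vadd_iff_vsub_eq _ _ _).2 (congrArg Subtype.val ht).symm⟩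
  · rintro ⟨t, rfl⟩
    simpa using Submodule.smul_mem _ t v.2

theorem exists_pair_forall_dist_lt_of_forall_exists_dist_lt (hV : finrank ℝ V = 2)
    {S : Set P} (hS : S.Finite) {p q : P} (hpq : p ≠ q)
    (h : ∀ c, dist c p = dist c q → ∃ z ∈ S, dist c z < dist c p) :
    ∃ x ∈ S, ∃ y ∈ S, ∀ c, dist c p = dist c q →
      dist c x < dist c p ∨ dist c y < dist c p := by
  obtain ⟨v, hv⟩ := exists_forall_dist_eq_iff_eq_vadd_midpoint hV hpq
  set m := midpoint ℝ p q
  obtain ⟨x, hx, y, hy, hxy⟩ := exists_pair_forall_add_mul_neg hS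
    (fun z => dist m z ^ 2 - dist m p ^ 2) (fun z => 2 * inner ℝ v (p -ᵥ z)) fun t => by
      obtain ⟨z, hz, hlt⟩ := h _ ((hv _).2 ⟨t, rfl⟩)
      exact ⟨z, hz, (dist_vadd_lt_dist_vadd_iff v m p z t).1 hlt⟩
  refine ⟨x, hx, y, hy, fun c hc => ?_⟩
  obtain ⟨t, rfl⟩ := (hv c).1 hc
  simpa only [dist_vadd_lt_dist_vadd_iff] using hxy t

end Euclidean

theorem stmt3_general (Q : Set Pt) (hQ : Q.Finite) (p q : Pt) (hpq : p ≠ q) :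
    (¬ ∃ (c : Pt) (r : ℝ), dist c p = r ∧ dist c q = r ∧ ∀ x ∈ Q, r ≤ dist c x) ↔
      (∃ x ∈ Q \ ({p, q} : Set Pt), ∃ y ∈ Q \ ({p, q} : Set Pt),
        ∀ (c : Pt) (r : ℝ), dist c p = r → dist c q = r →
          (dist c x < r ∨ dist c y < r)) := by
  constructor
  · intro hno
    push Not at hno
    obtain ⟨x, hx, y, hy, hxy⟩ := exists_pair_forall_dist_lt_of_forall_exists_dist_lt
      finrank_euclideanSpace_fin (hQ.sdiff (t := {p, q})) hpq fun c hc => by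
        obtain ⟨z, hz, hlt⟩ := hno c _ rfl hc.symm
        refine ⟨z, ⟨hz, ?_⟩, hlt⟩
        rintro (rfl | rfl)
        · exact lt_irrefl _ hlt
        · exact hlt.ne hc.symm
    exact ⟨x, hx, y, hy, fun c r hcp hcq => hcp ▸ hxy c (hcp.trans hcq.symm)⟩
  · rintro ⟨x, hx, y, hy, hcov⟩ ⟨c, r, hcp, hcq, hempty⟩
    rcases hcov c r hcp hcq with h | h
    · exact (hempty x hx.1).not_gt h
    · exact (hempty y hy.1).not_gt h

/-- There is no empty open disk with `p` and `q` on its boundary iff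
there are two points `x, y ∈ Q \ {p, q}` such that every open disk through `p` and `q`
contains `x` or `y` in its interior. -/
theorem stmt3 (Q : Set Pt) (hQ : Q.Finite) (p q : Pt)
    (hp : p ∈ Q) (hq : q ∈ Q) (hpq : p ≠ q) :
    (¬ ∃ (c : Pt) (r : ℝ), dist c p = r ∧ dist c q = r ∧ ∀ x ∈ Q, r ≤ dist c x) ↔
      (∃ x ∈ Q \ ({p, q} : Set Pt), ∃ y ∈ Q \ ({p, q} : Set Pt),
        ∀ (c : Pt) (r : ℝ), dist c p = r → dist c q = r →
          (dist c x < r ∨ dist c y < r)) :=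
  stmt3_general Q hQ p q hpq
end

section
/- Let Q be a finite set of points in ℝ² and let p, q ∈ Q be distinct. If every point of Q \ {p, q} lies strictly on one common side of the line through p and q (i.e., there is a unit vector u with ⟪u, q − p⟫ = 0 and ⟪r − p, u⟫ < 0 for all r ∈ Q \ {p, q}), then there exists an open disk with p and q on its boundary containing no point of Q; i.e., every convex hull edge {p, q} of Q is a Delaunay edge of Q. -/
open Metric

/-!
Start at the midpoint of `pq` and push the centre outwards along `u`: it stays on the
perpendicular bisector of `pq`, and for every other point `x` of `Q` the difference
`dist c x ^ 2 - dist c p ^ 2` grows linearly with slope `-2 ⟪x - p, u⟫ > 0`.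
Since `Q` is finite, far enough out no point of `Q` is closer to the centre than `p`.
-/

open Filter

section

variable {E : Type*} [NormedAddCommGroup E] [InnerProductSpace ℝ E]

theorem dist_add_smul_sq_sub_dist_add_smul_sq (c x p u : E) (t : ℝ) :
    dist (c + t • u) x ^ 2 - dist (c + t • u) p ^ 2
      = dist c x ^ 2 - dist c p ^ 2 - 2 * t * inner ℝ (x - p) u := by
  have hx : c + t • u - x = (c - x) + t • u := by abel
  have hp : c + t • u - p = (c - p) + t • u := by abel
  have hxp : x - p = (c - p) - (c - x) := by abel
  simp only [dist_eq_norm, hx, hp, hxp, norm_add_sq_real, inner_sub_left, inner_smul_right]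
  ring

theorem eventually_dist_add_smul_le {p x u : E} (hx : inner ℝ (x - p) u < 0) (c : E) :
    ∀ᶠ t : ℝ in atTop, dist (c + t • u) p ≤ dist (c + t • u) x := by
  filter_upwards [eventually_ge_atTop ((dist c p ^ 2 - dist c x ^ 2) / (-2 * inner ℝ (x - p) u))]
    with t ht
  rw [div_le_iff₀ (by linarith)] at ht
  have hdiff := dist_add_smul_sq_sub_dist_add_smul_sq c x p u t
  exact (sq_le_sq₀ dist_nonneg dist_nonneg).1 (by linarith)

theorem dist_midpoint_add_smul_eq {p q u : E} (horth : inner ℝ u (q - p) = 0) (t : ℝ) :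
    dist (midpoint ℝ p q + t • u) p = dist (midpoint ℝ p q + t • u) q := by
  rw [← AffineSubspace.mem_perpBisector_iff_dist_eq,
    AffineSubspace.mem_perpBisector_iff_inner_eq_zero, vsub_eq_sub, vsub_eq_sub,
    add_sub_cancel_left, real_inner_smul_left, horth, mul_zero]

end

theorem stmt7_general (Q : Set Pt) (hQ : Q.Finite) (p q : Pt)
    (u : Pt) (horth : (inner ℝ u (q - p) : ℝ) = 0)
    (hside : ∀ r ∈ Q \ ({p, q} : Set Pt), (inner ℝ (r - p) u : ℝ) < 0) :
    ∃ (c : Pt) (r : ℝ), dist c p = r ∧ dist c q = r ∧ ∀ x ∈ Q, r ≤ dist c x := by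
  obtain ⟨t, ht⟩ := ((hQ.sdiff (t := {p, q})).eventually_all.2
    fun x hx => eventually_dist_add_smul_le (hside x hx) (midpoint ℝ p q)).exists
  have hpq := dist_midpoint_add_smul_eq horth t
  refine ⟨midpoint ℝ p q + t • u, _, rfl, hpq.symm, fun x hx => ?_⟩
  by_cases hxpq : x ∈ ({p, q} : Set Pt)
  · rcases hxpq with rfl | rfl
    exacts [le_rfl, hpq.le]
  · exact ht x ⟨hx, hxpq⟩

/-- If all points of `Q \ {p, q}` lie strictly on one common side of the
line through `p` and `q`, then there is an open disk with `p` and `q` on its boundary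
containing no point of `Q`: convex hull edges are Delaunay edges. -/
theorem stmt7 (Q : Set Pt) (hQ : Q.Finite) (p q : Pt)
    (hp : p ∈ Q) (hq : q ∈ Q) (hpq : p ≠ q)
    (u : Pt) (hu : ‖u‖ = 1) (horth : (inner ℝ u (q - p) : ℝ) = 0)
    (hside : ∀ r ∈ Q \ ({p, q} : Set Pt), (inner ℝ (r - p) u : ℝ) < 0) :
    ∃ (c : Pt) (r : ℝ), dist c p = r ∧ dist c q = r ∧ ∀ x ∈ Q, r ≤ dist c x :=
  stmt7_general Q hQ p q u horth hside
end

section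
/- Let p, q, x ∈ ℝ² with x not on the line through p and q, let u be the unit vector with ⟪u, q − p⟫ = 0 and ⟪x − p, u⟫ > 0, and let c_f be the circumcenter of p, q, x (the unique point equidistant from p, q, x). Then for every point c on the perpendicular bisector of p and q with ⟪c − c_f, u⟫ > 0, the point x lies strictly inside the open disk centered at c passing through p and q, i.e., dist(x, c) < dist(p, c). Hence the circumcenter of a coface bounds on one side the centers of disks through p and q that are empty of x. -/
/-!
Both `c` and `c_f` lie on the perpendicular bisector of `p q`, so in the plane `c - c_f = t • u`,
with `t > 0` by the choice of `c`. For `c_f` equidistant from `p` and `x`,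
`dist x (c_f + v) ^ 2 - dist p (c_f + v) ^ 2 = -2 ⟪v, x - p⟫`, which for `v = t • u` is negative.
-/

open Metric

theorem dist_lt_dist_of_dist_eq_of_inner_pos {E : Type*} [NormedAddCommGroup E]
    [InnerProductSpace ℝ E] {p x o c : E} (ho : dist o p = dist o x)
    (hc : 0 < inner ℝ (c - o) (x - p)) : dist x c < dist p c := by
  have hsq (y : E) : dist y c ^ 2 = ‖y - o‖ ^ 2 - 2 * inner ℝ (y - o) (c - o) + ‖c - o‖ ^ 2 := by
    rw [dist_eq_norm, ← norm_sub_sq_real]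
    congr 2
    abel
  have hxp : x - p = (x - o) - (p - o) := by abel
  have ho' : ‖x - o‖ = ‖p - o‖ := by rw [← dist_eq_norm, ← dist_eq_norm, dist_comm, ← ho, dist_comm]
  rw [hxp, inner_sub_right, real_inner_comm, real_inner_comm (p - o)] at hc
  exact lt_of_pow_lt_pow_left₀ 2 dist_nonneg (by rw [hsq, hsq, ho']; linarith)

theorem stmt8_general (p q x : Pt) (hpq : p ≠ q)
    (u : Pt) (horth : (inner ℝ u (q - p) : ℝ) = 0)
    (hside : (0 : ℝ) < inner ℝ (x - p) u)
    (cf : Pt) (hcf1 : dist cf p = dist cf q) (hcf2 : dist cf p = dist cf x)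
    (c : Pt) (hc : dist c p = dist c q) (hcu : (0 : ℝ) < inner ℝ (c - cf) u) :
    dist x c < dist p c := by
  have hu : u ≠ 0 := by rintro rfl; simp at hside
  have hbis : inner ℝ (q - p) (c - cf) = 0 := by
    rw [real_inner_comm]
    exact EuclideanGeometry.inner_vsub_vsub_of_dist_eq_of_dist_eq (c₁ := cf) (c₂ := c)
      (by rwa [dist_comm p, dist_comm q]) (by rwa [dist_comm p, dist_comm q])
  have : Fact (Module.finrank ℝ Pt = 2) := ⟨finrank_euclideanSpace_fin⟩
  obtain ⟨t, ht⟩ := Submodule.mem_span_singleton.mp <|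
    Submodule.mem_span_singleton_of_inner_eq_zero_of_inner_eq_zero (sub_ne_zero.mpr hpq.symm) hu
      hbis (by rwa [real_inner_comm])
  rw [← ht, real_inner_smul_left] at hcu
  have ht0 : 0 < t := pos_of_mul_pos_left hcu real_inner_self_nonneg
  refine dist_lt_dist_of_dist_eq_of_inner_pos hcf2 ?_
  rw [← ht, real_inner_smul_left, real_inner_comm]
  exact mul_pos ht0 hside

/-- For `x` off the line through `p` and `q`, `u` the unit normal of the
line pointing towards `x`, and `c_f` the circumcenter of `p, q, x`: every center `c`
on the perpendicular bisector of `p` and `q` lying strictly beyond `c_f` in direction `u`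
yields an open disk through `p` and `q` that contains `x` strictly in its interior. -/
theorem stmt8 (p q x : Pt) (hpq : p ≠ q)
    (hx : ¬ Collinear ℝ ({p, q, x} : Set Pt))
    (u : Pt) (hu : ‖u‖ = 1) (horth : (inner ℝ u (q - p) : ℝ) = 0)
    (hside : (0 : ℝ) < inner ℝ (x - p) u)
    (cf : Pt) (hcf1 : dist cf p = dist cf q) (hcf2 : dist cf p = dist cf x)
    (c : Pt) (hc : dist c p = dist c q) (hcu : (0 : ℝ) < inner ℝ (c - cf) u) :
    dist x c < dist p c :=
  stmt8_general p q x hpq u horth hside cf hcf1 hcf2 c hc hcu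
end

section
/- Let p, q, x ∈ ℝ² with x not on the line through p and q, let u be the unit vector with ⟪u, q − p⟫ = 0 and ⟪x − p, u⟫ > 0 (so that H = {y : ⟪y − p, u⟫ > 0} is the open halfplane containing x), and let c_f be the circumcenter of p, q, x. If c_f ∉ H (i.e., ⟪c_f − p, u⟫ ≤ 0), then every point c ∈ H on the perpendicular bisector of p and q satisfies dist(x, c) < dist(p, c); in other words, if the circumcenter of the front coface of the edge {p, q} lies behind the edge, then no open disk through p and q centered in front of the edge is empty of x, so the edge admits no empty α-ball centered in front for any α. -/
open Metric

/-! The circumcenter `o` of `p, q, x` and the center `c` both lie on the perpendicular bisector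
of `p q`, which in the plane is a line in direction `u`. So `c = o + t • u` for some `t`, and
`t > 0` because `c` lies strictly further in direction `u` than `o`. Since `o` is equidistant
from `p` and `x`, `dist x c ^ 2 - dist p c ^ 2 = -2 ⟪x - p, c - o⟫ = -2 t ⟪x - p, u⟫ < 0`. -/

open EuclideanGeometry AffineSubspace Module
open scoped RealInnerProductSpace

section

variable {V P : Type*} [NormedAddCommGroup V] [InnerProductSpace ℝ V] [MetricSpace P]
  [NormedAddTorsor V P]

theorem dist_lt_dist_iff_inner_vsub_pos {x p c o : P} (h : dist o p = dist o x) :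
    dist x c < dist p c ↔ 0 < ⟪x -ᵥ p, c -ᵥ o⟫ := by
  have hsq : dist x c ^ 2 - dist p c ^ 2 = -2 * ⟪x -ᵥ p, c -ᵥ o⟫ := by
    rw [dist_comm o, dist_comm o, dist_eq_norm_vsub V, dist_eq_norm_vsub V] at h
    rw [dist_eq_norm_vsub V, dist_eq_norm_vsub V, ← vsub_sub_vsub_cancel_right x c o,
      ← vsub_sub_vsub_cancel_right p c o, ← vsub_sub_vsub_cancel_right x p o,
      norm_sub_sq_real, norm_sub_sq_real, inner_sub_left, h]
    ring
  rw [← sq_lt_sq₀ dist_nonneg dist_nonneg]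
  constructor <;> intro <;> linarith

theorem inner_vsub_pos_of_mem_perpBisector [Fact (finrank ℝ V = 2)] {p q c o : P} {u y : V}
    (hpq : p ≠ q) (hc : c ∈ perpBisector p q) (ho : o ∈ perpBisector p q)
    (hu : ⟪u, q -ᵥ p⟫ = 0) (hy : 0 < ⟪y, u⟫) (hco : 0 < ⟪c -ᵥ o, u⟫) :
    0 < ⟪y, c -ᵥ o⟫ := by
  have hdir : c -ᵥ o ∈ (ℝ ∙ (q -ᵥ p))ᗮ := by
    rw [← direction_perpBisector]
    exact vsub_mem_direction hc ho
  have hu0 : u ≠ 0 := by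
    rintro rfl
    simp at hy
  obtain ⟨t, ht⟩ := Submodule.mem_span_singleton.1 <|
    Submodule.mem_span_singleton_of_inner_eq_zero_of_inner_eq_zero (vsub_ne_zero.2 hpq.symm) hu0
      (Submodule.mem_orthogonal_singleton_iff_inner_right.1 hdir) ((real_inner_comm u _).trans hu)
  rw [← ht, real_inner_smul_left] at hco
  rw [← ht, real_inner_smul_right]
  have ht0 : 0 < t := pos_of_mul_pos_left hco real_inner_self_nonneg
  exact mul_pos ht0 hy

end

theorem stmt9_general (p q x : Pt) (hpq : p ≠ q)
    (u : Pt) (horth : (inner ℝ u (q - p) : ℝ) = 0)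
    (hside : (0 : ℝ) < inner ℝ (x - p) u)
    (cf : Pt) (hcf1 : dist cf p = dist cf q) (hcf2 : dist cf p = dist cf x)
    (hbehind : (inner ℝ (cf - p) u : ℝ) ≤ 0)
    (c : Pt) (hc : dist c p = dist c q) (hcH : (0 : ℝ) < inner ℝ (c - p) u) :
    dist x c < dist p c := by
  have : Fact (finrank ℝ Pt = 2) := ⟨finrank_euclideanSpace_fin⟩
  have hcf : (0 : ℝ) < ⟪c - cf, u⟫ := by
    rw [← sub_sub_sub_cancel_right c cf p, inner_sub_left]
    linarith
  exact (dist_lt_dist_iff_inner_vsub_pos hcf2).2 <|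
    inner_vsub_pos_of_mem_perpBisector hpq (mem_perpBisector_iff_dist_eq.2 hc)
      (mem_perpBisector_iff_dist_eq.2 hcf1) horth hside hcf

/-- With `H = {y | ⟪y - p, u⟫ > 0}` the open halfplane containing `x`
and `c_f` the circumcenter of `p, q, x`: if `c_f ∉ H`, then every point `c ∈ H` on the
perpendicular bisector of `p` and `q` satisfies `dist x c < dist p c`, i.e. no open disk
through `p` and `q` centered in front of the edge is empty of `x`. -/
theorem stmt9 (p q x : Pt) (hpq : p ≠ q)
    (hx : ¬ Collinear ℝ ({p, q, x} : Set Pt))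
    (u : Pt) (hu : ‖u‖ = 1) (horth : (inner ℝ u (q - p) : ℝ) = 0)
    (hside : (0 : ℝ) < inner ℝ (x - p) u)
    (cf : Pt) (hcf1 : dist cf p = dist cf q) (hcf2 : dist cf p = dist cf x)
    (hbehind : (inner ℝ (cf - p) u : ℝ) ≤ 0)
    (c : Pt) (hc : dist c p = dist c q) (hcH : (0 : ℝ) < inner ℝ (c - p) u) :
    dist x c < dist p c :=
  stmt9_general p q x hpq u horth hside cf hcf1 hcf2 hbehind c hc hcH
end

section
/- Let Q be a finite set of points in ℝ² with no four points cocircular, let p, q ∈ Q be distinct, and let H be one of the two open halfplanes bounded by the line through p and q. Then there is at most one point x ∈ Q ∩ H such that the open circumdisk of p, q, x contains no point of Q; i.e., in every time window a Delaunay edge has at most one coface on each of its sides. -/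
/-!
Circles through `p` and `q` have their centers on the perpendicular bisector of `pq`, so in the
plane the centers `o₁, o₂` of two cofaces `p q x₁`, `p q x₂` differ by a multiple `c • u` of the
normal `u`. Comparing the powers of `x₁` and `x₂` with respect to the two circles, emptiness of the
circumdisks gives `0 ≤ c * ⟪x₁ - p, u⟫` and `c * ⟪x₂ - p, u⟫ ≤ 0`; as both `x`'s lie on the
positive side, `c = 0`. Then the circles coincide and `p, q, x₁, x₂` are cocircular.
-/

open Metric

open Module RealInnerProductSpace

section Circumcenters

variable {E : Type*} [NormedAddCommGroup E] [InnerProductSpace ℝ E]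

theorem dist_sq_sub_dist_sq_eq (o₁ o₂ p x : E) :
    dist o₂ x ^ 2 - dist o₂ p ^ 2 =
      dist o₁ x ^ 2 - dist o₁ p ^ 2 + 2 * ⟪x - p, o₁ - o₂⟫ := by
  simp only [dist_eq_norm', @norm_sub_sq_real, inner_sub_left, inner_sub_right, real_inner_comm]
  ring

theorem inner_sub_nonneg_of_dist_eq_of_dist_le {o₁ o₂ p x : E}
    (h₁ : dist o₁ x = dist o₁ p) (h₂ : dist o₂ p ≤ dist o₂ x) :
    0 ≤ ⟪x - p, o₁ - o₂⟫ := by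
  have hpow := dist_sq_sub_dist_sq_eq o₁ o₂ p x
  have hsq := pow_le_pow_left₀ dist_nonneg h₂ 2
  rw [h₁] at hpow
  linarith

theorem inner_sub_eq_zero_of_dist_eq_of_dist_eq {o₁ o₂ p q : E}
    (h₁ : dist o₁ q = dist o₁ p) (h₂ : dist o₂ q = dist o₂ p) :
    ⟪q - p, o₁ - o₂⟫ = 0 := by
  have h₁₂ := inner_sub_nonneg_of_dist_eq_of_dist_le h₁ h₂.ge
  have h₂₁ := inner_sub_nonneg_of_dist_eq_of_dist_le h₂ h₁.ge
  rw [← neg_sub o₁ o₂, inner_neg_right] at h₂₁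
  linarith

theorem eq_of_empty_circumdisks_same_side [Fact (finrank ℝ E = 2)] {p q u x₁ x₂ o₁ o₂ : E}
    (hpq : p ≠ q) (hu : ⟪u, q - p⟫ = 0) (hx₁ : 0 < ⟪x₁ - p, u⟫) (hx₂ : 0 < ⟪x₂ - p, u⟫)
    (hq₁ : dist o₁ q = dist o₁ p) (hq₂ : dist o₂ q = dist o₂ p)
    (hx₁o₁ : dist o₁ x₁ = dist o₁ p) (hx₂o₂ : dist o₂ x₂ = dist o₂ p)
    (hx₂o₁ : dist o₁ p ≤ dist o₁ x₂) (hx₁o₂ : dist o₂ p ≤ dist o₂ x₁) :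
    o₁ = o₂ := by
  have hu₀ : u ≠ 0 := by rintro rfl; simp at hx₁
  have hqp : q - p ≠ 0 := sub_ne_zero.mpr hpq.symm
  obtain ⟨c, hc⟩ := Submodule.mem_span_singleton.mp <|
    Submodule.mem_span_singleton_of_inner_eq_zero_of_inner_eq_zero hqp hu₀
      (inner_sub_eq_zero_of_dist_eq_of_dist_eq hq₁ hq₂) (by rwa [real_inner_comm])
  have h₁ := inner_sub_nonneg_of_dist_eq_of_dist_le hx₁o₁ hx₁o₂
  have h₂ := inner_sub_nonneg_of_dist_eq_of_dist_le hx₂o₂ hx₂o₁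
  rw [← hc, inner_smul_right] at h₁
  rw [← neg_sub o₁ o₂, ← hc, inner_neg_right, inner_smul_right] at h₂
  have hc₀ : c = 0 := le_antisymm (by nlinarith) (by nlinarith)
  rw [hc₀, zero_smul, eq_comm, sub_eq_zero] at hc
  exact hc

end Circumcenters

theorem stmt12_general (Q : Set Pt)
    (hcocirc : ∀ a ∈ Q, ∀ b ∈ Q, ∀ c ∈ Q, ∀ d ∈ Q,
      a ≠ b → a ≠ c → a ≠ d → b ≠ c → b ≠ d → c ≠ d →
      ¬ ∃ (o : Pt) (r : ℝ), dist o a = r ∧ dist o b = r ∧ dist o c = r ∧ dist o d = r)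
    (p q : Pt) (hp : p ∈ Q) (hq : q ∈ Q) (hpq : p ≠ q)
    (u : Pt) (horth : (inner ℝ u (q - p) : ℝ) = 0) :
    {x : Pt | x ∈ Q ∧ (0 : ℝ) < inner ℝ (x - p) u ∧
      ∃ (o : Pt) (r : ℝ), dist o p = r ∧ dist o q = r ∧ dist o x = r ∧
        ∀ y ∈ Q, r ≤ dist o y}.Subsingleton := by
  have : Fact (finrank ℝ Pt = 2) := ⟨finrank_euclideanSpace_fin⟩
  have ne_of_side : ∀ x, 0 < ⟪x - p, u⟫ → p ≠ x ∧ q ≠ x := by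
    refine fun x hx => ⟨?_, ?_⟩ <;> rintro rfl
    · simp at hx
    · rw [real_inner_comm, horth] at hx
      exact hx.false
  rintro x₁ ⟨hx₁, hs₁, o₁, _, rfl, hq₁, hx₁o₁, hempty₁⟩
    x₂ ⟨hx₂, hs₂, o₂, _, rfl, hq₂, hx₂o₂, hempty₂⟩
  by_contra hne
  have ho : o₁ = o₂ := eq_of_empty_circumdisks_same_side hpq horth hs₁ hs₂ hq₁ hq₂ hx₁o₁ hx₂o₂
    (hempty₁ x₂ hx₂) (hempty₂ x₁ hx₁)
  subst ho
  exact hcocirc p hp q hq x₁ hx₁ x₂ hx₂ hpq (ne_of_side x₁ hs₁).1 (ne_of_side x₂ hs₂).1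
    (ne_of_side x₁ hs₁).2 (ne_of_side x₂ hs₂).2 hne ⟨o₁, _, rfl, hq₁, hx₁o₁, hx₂o₂⟩

/-- If no four points of `Q` are cocircular, then for each open side of the
line through distinct `p, q ∈ Q` there is at most one point `x ∈ Q` on that side such that
the open circumdisk of `p, q, x` contains no point of `Q`: a Delaunay edge has at most one
coface on each side. -/
theorem stmt12 (Q : Set Pt) (hQ : Q.Finite)
    (hcocirc : ∀ a ∈ Q, ∀ b ∈ Q, ∀ c ∈ Q, ∀ d ∈ Q,
      a ≠ b → a ≠ c → a ≠ d → b ≠ c → b ≠ d → c ≠ d →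
      ¬ ∃ (o : Pt) (r : ℝ), dist o a = r ∧ dist o b = r ∧ dist o c = r ∧ dist o d = r)
    (p q : Pt) (hp : p ∈ Q) (hq : q ∈ Q) (hpq : p ≠ q)
    (u : Pt) (hu : ‖u‖ = 1) (horth : (inner ℝ u (q - p) : ℝ) = 0) :
    {x : Pt | x ∈ Q ∧ (0 : ℝ) < inner ℝ (x - p) u ∧
      ∃ (o : Pt) (r : ℝ), dist o p = r ∧ dist o q = r ∧ dist o x = r ∧
        ∀ y ∈ Q, r ≤ dist o y}.Subsingleton :=
  stmt12_general Q hcocirc p q hp hq hpq u horth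
end

section
/- Let p_1, …, p_n be a point sequence in ℝ² in general position, let i ≤ a < b ≤ j < n, and suppose the triangle t with vertices p_a, p_b, p_k (i ≤ k ≤ j) is a Delaunay triangle of the time window P_{i,j} but not of P_{i,j+1} (equivalently, p_{j+1} lies in the open circumdisk of t). If m is any index with i ≤ m ≤ j+1 such that p_m lies on the same side of the line through p_a and p_b as p_k and the triangle with vertices p_a, p_b, p_m is a Delaunay triangle of P_{i,j+1}, then m = j+1; i.e., when a point insertion destroys a coface of a surviving Delaunay edge e, the new coface of e on that side has the newly inserted point as its highest-index vertex. -/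
/-!
Two circles through the endpoints `p a`, `p b` of the edge have power functions
`x ↦ ‖x - o‖² - r²` whose difference is affine and vanishes at `p a` and `p b`; in the plane it is
therefore `2c` times the signed distance to the line `p a p b`, for some scalar `c`. The old circle
has `p k` on it and the new one empty, so `c ≤ 0`; if `m ≤ j`, then the new circle has `p m` on it
and the old one is empty, so `c ≥ 0`. Since `p k` and `p m` lie on the same side, `c = 0` and the
two circles coincide, which is impossible because `p (j + 1)` lies inside the old one.
-/

open Metric

open Module

open scoped RealInnerProductSpace

section

variable {E : Type*} [NormedAddCommGroup E] [InnerProductSpace ℝ E]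

theorem exists_eq_smul_of_inner_eq_zero_of_finrank_eq_two (hE : finrank ℝ E = 2)
    {u v w : E} (hv : v ≠ 0) (hu : u ≠ 0) (huv : ⟪u, v⟫ = 0) (hwv : ⟪w, v⟫ = 0) :
    ∃ c : ℝ, w = c • u := by
  have : Fact (finrank ℝ E = 1 + 1) := ⟨hE⟩
  have hu' : u ∈ (ℝ ∙ v)ᗮ :=
    Submodule.mem_orthogonal_singleton_iff_inner_right.mpr (by rwa [real_inner_comm])
  have hw' : w ∈ (ℝ ∙ v)ᗮ :=
    Submodule.mem_orthogonal_singleton_iff_inner_right.mpr (by rwa [real_inner_comm])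
  obtain ⟨c, hc⟩ := (finrank_eq_one_iff_of_nonzero' (⟨u, hu'⟩ : (ℝ ∙ v)ᗮ)
    (by simpa using hu)).mp (Submodule.finrank_orthogonal_span_singleton hv) ⟨w, hw'⟩
  exact ⟨c, (congrArg Subtype.val hc).symm⟩

theorem dist_sq_sub_dist_sq_sub_dist_sq_sub_dist_sq (o o' x y : E) :
    (dist o x ^ 2 - dist o' x ^ 2) - (dist o y ^ 2 - dist o' y ^ 2) = 2 * ⟪x - y, o' - o⟫ := by
  simp only [dist_eq_norm, norm_sub_sq_real, inner_sub_right, real_inner_comm o,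
    real_inner_comm o']
  ring

theorem center_eq_of_circles_through_edge_same_side (hE : finrank ℝ E = 2)
    {A B K M o o' u : E} {r r' : ℝ} (hAB : A ≠ B) (hu : ⟪u, B - A⟫ = 0)
    (hoA : dist o A = r) (hoB : dist o B = r) (hoK : dist o K = r) (hoM : r ≤ dist o M)
    (ho'A : dist o' A = r') (ho'B : dist o' B = r') (ho'M : dist o' M = r')
    (ho'K : r' ≤ dist o' K) (hK : 0 < ⟪K - A, u⟫) (hM : 0 < ⟪M - A, u⟫) :
    o' = o := by
  have hu0 : u ≠ 0 := by rintro rfl; simp at hK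
  have hperp : ⟪o' - o, B - A⟫ = 0 := by
    have h := dist_sq_sub_dist_sq_sub_dist_sq_sub_dist_sq o o' B A
    rw [hoA, hoB, ho'A, ho'B, sub_self, eq_comm, real_inner_comm] at h
    linarith
  obtain ⟨c, hc⟩ :=
    exists_eq_smul_of_inner_eq_zero_of_finrank_eq_two hE (sub_ne_zero.mpr hAB.symm) hu0 hu hperp
  have hpower : ∀ x, (dist o x ^ 2 - dist o' x ^ 2) - (r ^ 2 - r' ^ 2) = 2 * c * ⟪x - A, u⟫ := by
    intro x
    rw [← hoA, ← ho'A, dist_sq_sub_dist_sq_sub_dist_sq_sub_dist_sq, hc, real_inner_smul_right]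
    ring
  have hr' : 0 ≤ r' := ho'A ▸ dist_nonneg
  have hr : 0 ≤ r := hoA ▸ dist_nonneg
  have hc_nonpos : c ≤ 0 := by
    have h := hpower K
    rw [hoK] at h
    nlinarith [pow_le_pow_left₀ hr' ho'K 2]
  have hc_nonneg : 0 ≤ c := by
    have h := hpower M
    rw [ho'M] at h
    nlinarith [pow_le_pow_left₀ hr hoM 2]
  rw [← sub_eq_zero, hc, le_antisymm hc_nonpos hc_nonneg, zero_smul]

end

theorem stmt13_general (n : ℕ) (p : ℕ → Pt) (hgp : GenPos n p)
    (i j a b k : ℕ) (hi : 1 ≤ i) (hia : i ≤ a) (hab : a < b) (hbj : b ≤ j) (hjn : j < n)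
    (hik : i ≤ k) (hkj : k ≤ j)
    (o : Pt) (r : ℝ)
    (hoa : dist o (p a) = r) (hob : dist o (p b) = r) (hok : dist o (p k) = r)
    (hDel : ∀ m : ℕ, i ≤ m → m ≤ j → r ≤ dist o (p m))
    (hdestroy : dist o (p (j + 1)) < r)
    (m : ℕ) (him : i ≤ m) (hmj : m ≤ j + 1)
    (hside : ∃ u : Pt, ‖u‖ = 1 ∧ (inner ℝ u (p b - p a) : ℝ) = 0 ∧
      (0 : ℝ) < inner ℝ (p k - p a) u ∧ (0 : ℝ) < inner ℝ (p m - p a) u)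
    (hDelm : ∃ (o' : Pt) (r' : ℝ), dist o' (p a) = r' ∧ dist o' (p b) = r' ∧
      dist o' (p m) = r' ∧ ∀ m' : ℕ, i ≤ m' → m' ≤ j + 1 → r' ≤ dist o' (p m')) :
    m = j + 1 := by
  by_contra hm
  obtain ⟨u, -, hu, hku, hmu⟩ := hside
  obtain ⟨o', r', hoa', hob', hom', hDel'⟩ := hDelm
  have hpab : p a ≠ p b :=
    hgp.1 a b (hi.trans hia) (by omega) (by omega) (by omega) hab.ne
  have hoo : o' = o :=
    center_eq_of_circles_through_edge_same_side finrank_euclideanSpace_fin hpab hu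
      hoa hob hok (hDel m him (by omega)) hoa' hob' hom' (hDel' k hik (by omega)) hku hmu
  have hrr : r' = r := by rw [← hoa, ← hoa', hoo]
  subst hoo hrr
  exact (hDel' (j + 1) (by omega) le_rfl).not_gt hdestroy

/-- Let the triangle with vertices `p a, p b, p k` (a coface of the edge
`e = {p a, p b}`) be a Delaunay triangle of `P_{i,j}` (circumcircle `(o, r)` empty of
points of the window) destroyed by the insertion of `p (j+1)` (which lies in the open
circumdisk). If `p m` lies on the same side of the line through `p a` and `p b` as `p k`
and the triangle `p a, p b, p m` is a Delaunay triangle of `P_{i,j+1}`, then `m = j + 1`: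
the new coface has the newly inserted point as its highest-index vertex. -/
theorem stmt13 (n : ℕ) (p : ℕ → Pt) (hgp : GenPos n p)
    (i j a b k : ℕ) (hi : 1 ≤ i) (hia : i ≤ a) (hab : a < b) (hbj : b ≤ j) (hjn : j < n)
    (hik : i ≤ k) (hkj : k ≤ j) (hka : k ≠ a) (hkb : k ≠ b)
    (o : Pt) (r : ℝ)
    (hoa : dist o (p a) = r) (hob : dist o (p b) = r) (hok : dist o (p k) = r)
    (hDel : ∀ m : ℕ, i ≤ m → m ≤ j → r ≤ dist o (p m))
    (hdestroy : dist o (p (j + 1)) < r)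
    (m : ℕ) (him : i ≤ m) (hmj : m ≤ j + 1) (hma : m ≠ a) (hmb : m ≠ b)
    (hside : ∃ u : Pt, ‖u‖ = 1 ∧ (inner ℝ u (p b - p a) : ℝ) = 0 ∧
      (0 : ℝ) < inner ℝ (p k - p a) u ∧ (0 : ℝ) < inner ℝ (p m - p a) u)
    (hDelm : ∃ (o' : Pt) (r' : ℝ), dist o' (p a) = r' ∧ dist o' (p b) = r' ∧
      dist o' (p m) = r' ∧ ∀ m' : ℕ, i ≤ m' → m' ≤ j + 1 → r' ≤ dist o' (p m')) :
    m = j + 1 :=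
  stmt13_general n p hgp i j a b k hi hia hab hbj hjn hik hkj o r hoa hob hok hDel hdestroy m him
    hmj hside hDelm
end
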